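/- arXiv:0809.0137 — 9 statements merged into one kernel-verified Lean document; each statement's English description precedes it below -/
import Mathlib

section
/- For X = (x₀, …, x_{d+1}) ∈ H^{d+2} with all pairwise distances positive, the generalized law of sines holds: for all 0 ≤ i < j ≤ d+1, p_d sin_{x_i}(X) divided by the product of ‖x_s − x_r‖ over all pairs 0 ≤ s < r ≤ d+1 with s, r ≠ i, equals p_d sin_{x_j}(X) divided by the product of ‖x_ℓ − x_q‖ over all pairs 0 ≤ ℓ < q ≤ d+1 with ℓ, q ≠ j. -/
/-! Dividing the polar sine at `x_i` by the edges avoiding `x_i` completes the product of the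
edges at `x_i` to the product of all edges of the simplex, so both sides of the law equal
`M_{d+1}(X) / ∏_{s<r} ‖x_s − x_r‖`. -/

open Metric Finset

noncomputable section

/-- The n-content M_n of the points y₀,…,y_n: n! times the n-volume of their simplex,
computed as the square root of the Gram determinant of (yᵢ − y₀). -/
def simplexContent {H : Type*} [NormedAddCommGroup H] [InnerProductSpace ℝ H]
    (n : ℕ) (y : Fin (n + 1) → H) : ℝ :=
  Real.sqrt (Matrix.det (Matrix.of fun i j : Fin n =>
    (inner ℝ (y i.succ - y 0) (y j.succ - y 0) : ℝ)))

/-- The polar sine of the (d+1)-simplex X at the vertex X i: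
p_d sin_{x_i}(X) = M_{d+1}(X) / ∏_{j ≠ i} ‖x_j − x_i‖ (0 when the denominator vanishes). -/
def polarSin {H : Type*} [NormedAddCommGroup H] [InnerProductSpace ℝ H]
    {n : ℕ} (X : Fin (n + 2) → H) (i : Fin (n + 2)) : ℝ :=
  simplexContent (n + 1) X / ∏ j ∈ Finset.univ.erase i, dist (X j) (X i)

section
variable {ι M : Type*} [Fintype ι] [LinearOrder ι] [CommMonoid M]

theorem prod_erase_eq_prod_lt_pairs_incident (f : ι → ι → M) (hf : ∀ a b, f a b = f b a)
    (i : ι) :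
    ∏ k ∈ univ.erase i, f k i =
      ∏ p ∈ univ.filter (fun p : ι × ι => p.1 < p.2 ∧ (p.1 = i ∨ p.2 = i)), f p.1 p.2 := by
  refine prod_nbij' (fun k => (min k i, max k i)) (fun p => if p.1 = i then p.2 else p.1)
    ?_ ?_ ?_ ?_ ?_
  · intro k hk
    rcases lt_or_gt_of_ne (ne_of_mem_erase hk) with h | h
    · simp [h, h.le, h.ne]
    · simp [h, h.le, h.ne']
  · rintro ⟨a, b⟩ hp
    obtain ⟨hab, rfl | rfl⟩ : a < b ∧ (a = i ∨ b = i) := by simpa using hp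
    · simp [hab.ne']
    · simp [hab.ne]
  · intro k hk
    rcases lt_or_gt_of_ne (ne_of_mem_erase hk) with h | h
    · simp [h.le, h.ne]
    · simp [h.le]
  · rintro ⟨a, b⟩ hp
    obtain ⟨hab, rfl | rfl⟩ : a < b ∧ (a = i ∨ b = i) := by simpa using hp
    · simp [hab.le]
    · simp [hab.ne, hab.le]
  · intro k _
    rcases le_total k i with h | h
    · simp [h]
    · simp [h, hf]

theorem prod_erase_mul_prod_lt_pairs_avoiding (f : ι → ι → M) (hf : ∀ a b, f a b = f b a)
    (i : ι) :
    (∏ k ∈ univ.erase i, f k i) *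
        ∏ p ∈ univ.filter (fun p : ι × ι => p.1 < p.2 ∧ p.1 ≠ i ∧ p.2 ≠ i), f p.1 p.2 =
      ∏ p ∈ univ.filter (fun p : ι × ι => p.1 < p.2), f p.1 p.2 := by
  rw [← prod_filter_not_mul_prod_filter (univ.filter fun p : ι × ι => p.1 < p.2)
    (fun p => p.1 ≠ i ∧ p.2 ≠ i), filter_filter, filter_filter,
    prod_erase_eq_prod_lt_pairs_incident f hf]
  simp_rw [not_and_or, not_ne_iff]

end

theorem polarSin_div_prod_lt_pairs_avoiding {H : Type*} [NormedAddCommGroup H]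
    [InnerProductSpace ℝ H] {n : ℕ} (X : Fin (n + 2) → H) (i : Fin (n + 2)) :
    polarSin X i /
        ∏ p ∈ univ.filter
          (fun p : Fin (n + 2) × Fin (n + 2) => p.1 < p.2 ∧ p.1 ≠ i ∧ p.2 ≠ i),
          dist (X p.1) (X p.2) =
      simplexContent (n + 1) X /
        ∏ p ∈ univ.filter (fun p : Fin (n + 2) × Fin (n + 2) => p.1 < p.2),
          dist (X p.1) (X p.2) := by
  rw [polarSin, div_div, prod_erase_mul_prod_lt_pairs_avoiding (fun a b => dist (X a) (X b))
    (fun a b => dist_comm (X a) (X b)) i]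

theorem law_of_polar_sines_general {H : Type*} [NormedAddCommGroup H] [InnerProductSpace ℝ H]
    (d : ℕ) (X : Fin (d + 2) → H)
    (i j : Fin (d + 2)) :
    polarSin X i /
        ∏ p ∈ Finset.univ.filter
          (fun p : Fin (d + 2) × Fin (d + 2) => p.1 < p.2 ∧ p.1 ≠ i ∧ p.2 ≠ i),
          dist (X p.1) (X p.2) =
      polarSin X j /
        ∏ p ∈ Finset.univ.filter
          (fun p : Fin (d + 2) × Fin (d + 2) => p.1 < p.2 ∧ p.1 ≠ j ∧ p.2 ≠ j),
          dist (X p.1) (X p.2) := by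
  rw [polarSin_div_prod_lt_pairs_avoiding, polarSin_div_prod_lt_pairs_avoiding]

/-- Generalized law of sines: for 0 ≤ i < j ≤ d+1,
psin_{x_i}(X) / ∏_{s<r, s,r≠i} ‖x_s−x_r‖ = psin_{x_j}(X) / ∏_{ℓ<q, ℓ,q≠j} ‖x_ℓ−x_q‖. -/
theorem law_of_polar_sines {H : Type*} [NormedAddCommGroup H] [InnerProductSpace ℝ H]
    (d : ℕ) (hd : 1 ≤ d) (X : Fin (d + 2) → H)
    (hpos : ∀ i j : Fin (d + 2), i ≠ j → 0 < dist (X i) (X j))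
    (i j : Fin (d + 2)) (hij : i < j) :
    polarSin X i /
        ∏ p ∈ Finset.univ.filter
          (fun p : Fin (d + 2) × Fin (d + 2) => p.1 < p.2 ∧ p.1 ≠ i ∧ p.2 ≠ i),
          dist (X p.1) (X p.2) =
      polarSin X j /
        ∏ p ∈ Finset.univ.filter
          (fun p : Fin (d + 2) × Fin (d + 2) => p.1 < p.2 ∧ p.1 ≠ j ∧ p.2 ≠ j),
          dist (X p.1) (X p.2) :=
  law_of_polar_sines_general d X i j
end
end

section
/- For X = (x₀,…,x_{d+1}) ∈ H^{d+2} and any 1 ≤ i ≤ d+1, the product formula p_d sin_{x₀}(X) = sin(θ_i(X)) · p_{d−1}sin_{x₀}(X(i)) holds, where θ_i(X) is the elevation angle of x_i − x₀ with respect to the linear span of {x_j − x₀ : j ≠ i, j ≥ 1}, and X(i) is X with the i-th coordinate removed. -/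
/-!
The polar sine at `x₀` is `√det G(u) / ∏ ‖u_j‖`, where `u_j = x_j - x₀` and `G` is the Gram matrix.
Base times height: `det G(w, v) = dist(w, span v)² · det G(v)`. Indeed, writing `w = q + p` with
`p ∈ span v` and `q ⊥ span v`, the first row of `G(w, v)` is the row of `q` plus a combination of
the other rows, and the row of `q` is `(‖q‖², 0, …, 0)`. Applied to `w = u_i` and the remaining
vectors, whose span is the direction of the affine span of `X(i)`, this splits off the factor
`sin θ_i(X) = dist(x_i, L[X(i)]) / ‖x_i - x₀‖`.
-/

open Metric Finset

noncomputable section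

/-- The smallest pairwise distance among the coordinates of X. -/
def tmin {H : Type*} [PseudoMetricSpace H] {n : ℕ} (X : Fin n → H) : ℝ :=
  sInf {r | ∃ i j, i ≠ j ∧ r = dist (X i) (X j)}

open Matrix Set

theorem Fin.prod_univ_erase_eq_prod_succAbove {M : Type*} [CommMonoid M] {n : ℕ}
    (f : Fin (n + 1) → M) (i : Fin (n + 1)) :
    ∏ j ∈ univ.erase i, f j = ∏ j, f (i.succAbove j) := by
  rw [← Finset.compl_singleton, ← Fin.image_succAbove_univ,
    prod_image Fin.succAbove_right_injective.injOn]

theorem Matrix.det_eq_mul_det_submatrix_succ_of_row_zero {R : Type*} [CommRing R] {n : ℕ}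
    (A : Matrix (Fin (n + 1)) (Fin (n + 1)) R) (h : ∀ j : Fin n, A 0 j.succ = 0) :
    A.det = A 0 0 * (A.submatrix Fin.succ Fin.succ).det := by
  simp [det_succ_row_zero, Fin.sum_univ_succ, h]

section

variable {H : Type*} [NormedAddCommGroup H] [InnerProductSpace ℝ H]

theorem Submodule.infDist_eq_norm_sub_starProjection (K : Submodule ℝ H)
    [K.HasOrthogonalProjection] (w : H) :
    infDist w K = ‖w - K.starProjection w‖ := by
  rw [K.starProjection_minimal, infDist_eq_iInf]
  simp [dist_eq_norm]

theorem AffineSubspace.infDist_eq_infDist_sub_direction (S : AffineSubspace ℝ H) {x : H}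
    (hx : x ∈ S) (y : H) :
    infDist y S = infDist (y - x) S.direction := by
  rw [AffineSubspace.coe_direction_eq_vsub_set_right hx]
  exact (infDist_image (IsometryEquiv.subRight x).isometry).symm

theorem Matrix.det_gram_comp_perm {ι : Type*} [Fintype ι] [DecidableEq ι] (u : ι → H)
    (σ : Equiv.Perm ι) : (gram ℝ (u ∘ σ)).det = (gram ℝ u).det :=
  det_submatrix_equiv_self σ (gram ℝ u)

theorem Matrix.det_gram_cons_of_orthogonal {m : ℕ} (v : Fin m → H) {w p : H}
    (hp : p ∈ Submodule.span ℝ (range v)) (horth : ∀ j, inner ℝ (w - p) (v j) = 0) :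
    (gram ℝ (Fin.cons w v : Fin (m + 1) → H)).det = ‖w - p‖ ^ 2 * (gram ℝ v).det := by
  obtain ⟨c, rfl⟩ := (Submodule.mem_span_range_iff_exists_fun ℝ).1 hp
  set p := ∑ k, c k • v k
  set M := gram ℝ (Fin.cons w v : Fin (m + 1) → H)
  set r : Fin (m + 1) → ℝ := fun j => inner ℝ (w - p) ((Fin.cons w v : Fin (m + 1) → H) j)
  have horth_p : inner ℝ (w - p) p = 0 := by
    simp [p, inner_sum, real_inner_smul_right, horth]
  have hrow : M 0 = r + ∑ k, (Fin.cons 0 c : Fin (m + 1) → ℝ) k • M k := by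
    funext j
    simp [M, r, p, Fin.sum_univ_succ, inner_sub_left, sum_inner, real_inner_smul_left]
  have hr0 : r 0 = ‖w - p‖ ^ 2 :=
    calc r 0 = inner ℝ (w - p) ((w - p) + p) := by rw [sub_add_cancel]; rfl
      _ = ‖w - p‖ ^ 2 := by rw [inner_add_right, horth_p, add_zero, real_inner_self_eq_norm_sq]
  calc M.det = (M.updateRow 0 (M 0)).det := by rw [updateRow_eq_self]
    _ = (M.updateRow 0 r).det := by rw [hrow, det_updateRow_add, det_updateRow_sum]; simp
    _ = ‖w - p‖ ^ 2 * (gram ℝ v).det := by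
      rw [det_eq_mul_det_submatrix_succ_of_row_zero _ (by simp [r, horth]), updateRow_self, hr0]
      rfl

theorem Matrix.det_gram_cons {m : ℕ} (v : Fin m → H) (w : H) :
    (gram ℝ (Fin.cons w v : Fin (m + 1) → H)).det =
      infDist w (Submodule.span ℝ (range v)) ^ 2 * (gram ℝ v).det := by
  set K := Submodule.span ℝ (range v)
  have : FiniteDimensional ℝ K := FiniteDimensional.span_of_finite ℝ (finite_range v)
  rw [K.infDist_eq_norm_sub_starProjection,
    det_gram_cons_of_orthogonal v (K.starProjection_apply_mem w)]
  exact fun j => K.starProjection_inner_eq_zero w (v j) (Submodule.subset_span ⟨j, rfl⟩)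

theorem Matrix.det_gram_eq_infDist_sq_mul {m : ℕ} (u : Fin (m + 1) → H) (l : Fin (m + 1)) :
    (gram ℝ u).det =
      infDist (u l) (Submodule.span ℝ (range (u ∘ l.succAbove))) ^ 2 *
        (gram ℝ (u ∘ l.succAbove)).det := by
  rw [← det_gram_comp_perm u l.cycleRange.symm, ← Fin.cons_removeNth_eq_comp_cycleRange_symm,
    det_gram_cons]
  rfl

def polarSinOfVectors {ι : Type*} [Fintype ι] [DecidableEq ι] (u : ι → H) : ℝ :=
  √(gram ℝ u).det / ∏ j, ‖u j‖

theorem polarSinOfVectors_eq_infDist_div_mul {m : ℕ} (u : Fin (m + 1) → H) (l : Fin (m + 1)) :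
    polarSinOfVectors u =
      infDist (u l) (Submodule.span ℝ (range (u ∘ l.succAbove))) / ‖u l‖ *
        polarSinOfVectors (u ∘ l.succAbove) := by
  rw [polarSinOfVectors, polarSinOfVectors, det_gram_eq_infDist_sq_mul u l,
    Real.sqrt_mul (sq_nonneg _), Real.sqrt_sq infDist_nonneg, Fin.prod_univ_succAbove _ l,
    mul_div_mul_comm]
  rfl

theorem polarSin_zero_eq_polarSinOfVectors {n : ℕ} (X : Fin (n + 2) → H) :
    polarSin X 0 = polarSinOfVectors (fun j : Fin (n + 1) => X j.succ - X 0) := by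
  simp only [polarSin, simplexContent, polarSinOfVectors, Fin.prod_univ_erase_eq_prod_succAbove,
    Fin.succAbove_zero, dist_eq_norm]
  rfl

theorem infDist_affineSpan_range_eq_infDist_span_sub {n : ℕ} (Y : Fin (n + 1) → H) (x : H) :
    infDist x (affineSpan ℝ (range Y)) =
      infDist (x - Y 0) (Submodule.span ℝ (range fun j : Fin n => Y j.succ - Y 0)) := by
  rw [AffineSubspace.infDist_eq_infDist_sub_direction _ (mem_affineSpan ℝ (mem_range_self 0)),
    direction_affineSpan, vectorSpan_range_eq_span_range_vsub_right ℝ Y 0,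
    ← Fin.cons_self_tail (fun j => Y j -ᵥ Y 0), Fin.range_cons, vsub_self,
    Submodule.span_insert_zero]
  rfl

end

theorem polarSin_product_formula_general {H : Type*} [NormedAddCommGroup H] [InnerProductSpace ℝ H]
    (e : ℕ) (X : Fin (e + 3) → H) (i : Fin (e + 3)) (hi : 1 ≤ (i : ℕ)) :
    polarSin X 0 =
      (Metric.infDist (X i) ((affineSpan ℝ (Set.range (X ∘ i.succAbove)) : AffineSubspace ℝ H) : Set H)
          / dist (X i) (X 0)) *
        polarSin (X ∘ i.succAbove) 0 := by
  obtain ⟨l, rfl⟩ := Fin.exists_succ_eq.2 ((Fin.pos_iff_ne_zero' i).1 hi)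
  have hfaces : (fun j => (X ∘ l.succ.succAbove) j.succ - (X ∘ l.succ.succAbove) 0) =
      (fun j : Fin (e + 2) => X j.succ - X 0) ∘ l.succAbove := by
    funext j
    simp [Fin.succ_succAbove_succ]
  rw [polarSin_zero_eq_polarSinOfVectors, polarSin_zero_eq_polarSinOfVectors, hfaces,
    infDist_affineSpan_range_eq_infDist_span_sub, hfaces, dist_eq_norm]
  simp only [Function.comp_apply, Fin.succ_succAbove_zero]
  exact polarSinOfVectors_eq_infDist_div_mul _ l

/-- Product formula: p_d sin_{x₀}(X) = sin(θ_i(X)) · p_{d−1} sin_{x₀}(X(i)), where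
sin(θ_i(X)) = dist(x_i, L[X(i)]) / ‖x_i − x₀‖ and X(i) drops the i-th coordinate.
(Here d = e + 1 ≥ 1.) -/
theorem polarSin_product_formula {H : Type*} [NormedAddCommGroup H] [InnerProductSpace ℝ H]
    (e : ℕ) (X : Fin (e + 3) → H) (i : Fin (e + 3)) (hi : 1 ≤ (i : ℕ))
    (hmin : 0 < tmin X) :
    polarSin X 0 =
      (Metric.infDist (X i) ((affineSpan ℝ (Set.range (X ∘ i.succAbove)) : AffineSubspace ℝ H) : Set H)
          / dist (X i) (X 0)) *
        polarSin (X ∘ i.succAbove) 0 :=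
  polarSin_product_formula_general e X i hi
end
end

section
/- Let x ∈ H, 0 < t < ∞, and X = (x₀,…,x_{d+1}) ∈ B(x,t)^{d+2}. If for some 0 < ω ≤ 1 and some 1 ≤ i ≤ d+1 one has M_d(X(i)) ≥ ω·t^d, then p_d sin_{x₀}(X) ≥ (ω / 2^{d+1}) · dist(x_i, L[X(i)]) / t. -/
/-!
With `v j = x_{j+1} - x₀`, `M_{d+1}(X)²` is the Gram determinant of the `v j`. Splitting
`v_{i-1} = x_i - x₀` into its projection onto the span of the other edges plus an orthogonal
part `w`, row and column operations followed by a Laplace expansion along row `i - 1` factor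
this determinant as `‖w‖²` times the Gram determinant of the other edges, i.e.
`M_{d+1}(X) = ‖w‖ · M_d(X(i))`, and `‖w‖ ≥ dist(x_i, L[X(i)])`. Each of the `d + 1` edges at
`x₀` has length at most `2t`.
-/

open Metric Finset

noncomputable section

namespace Matrix

variable {R : Type*} [CommRing R] {n : ℕ}

theorem det_updateRow_add_sum_succAbove (A : Matrix (Fin (n + 1)) (Fin (n + 1)) R)
    (k : Fin (n + 1)) (c : Fin n → R) :
    (A.updateRow k (A k + ∑ m, c m • A (k.succAbove m))).det = A.det := by
  have h := det_updateRow_sum A k (k.insertNth 1 c)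
  rw [Fin.sum_univ_succAbove _ k] at h
  simpa using h

theorem det_updateCol_add_sum_succAbove (A : Matrix (Fin (n + 1)) (Fin (n + 1)) R)
    (k : Fin (n + 1)) (c : Fin n → R) :
    (A.updateCol k (fun a ↦ A a k + ∑ m, c m * A a (k.succAbove m))).det = A.det := by
  have h := det_updateCol_sum A k (k.insertNth 1 c)
  simp_rw [Fin.sum_univ_succAbove _ k] at h
  simpa using h

section Gram

variable {E : Type*} [SeminormedAddCommGroup E] [InnerProductSpace ℝ E]

theorem det_gram_update_add_sum_succAbove (v : Fin (n + 1) → E) (k : Fin (n + 1))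
    (c : Fin n → ℝ) :
    (gram ℝ (Function.update v k (v k + ∑ m, c m • v (k.succAbove m)))).det =
      (gram ℝ v).det := by
  set v' := Function.update v k (v k + ∑ m, c m • v (k.succAbove m))
  have hrow : (of fun a b ↦ inner ℝ (v' a) (v b)) =
      (gram ℝ v).updateRow k (gram ℝ v k + ∑ m, c m • gram ℝ v (k.succAbove m)) := by
    ext a b
    rcases eq_or_ne a k with rfl | ha
    · simp [v', inner_add_left, sum_inner, real_inner_smul_left]
    · simp [v', ha]
  have hcol : gram ℝ v' = (of fun a b ↦ inner ℝ (v' a) (v b)).updateCol k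
      (fun a ↦ inner ℝ (v' a) (v k) + ∑ m, c m * inner ℝ (v' a) (v (k.succAbove m))) := by
    ext a b
    rcases eq_or_ne b k with rfl | hb
    · simp [v', inner_add_right, inner_sum, real_inner_smul_right]
    · simp [v', hb]
  rw [hcol]
  refine (det_updateCol_add_sum_succAbove _ k c).trans ?_
  rw [hrow, det_updateRow_add_sum_succAbove]

theorem det_gram_eq_norm_sq_mul_of_inner_eq_zero (v : Fin (n + 1) → E) (k : Fin (n + 1))
    (hv : ∀ m, inner ℝ (v k) (v (k.succAbove m)) = 0) :
    (gram ℝ v).det = ‖v k‖ ^ 2 * (gram ℝ (v ∘ k.succAbove)).det := by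
  rw [det_succ_row _ k, Finset.sum_eq_single k]
  · rw [show (gram ℝ v).submatrix k.succAbove k.succAbove = gram ℝ (v ∘ k.succAbove) from rfl]
    simp [← two_mul, pow_mul]
  · intro b _ hb
    obtain ⟨m, rfl⟩ := Fin.exists_succAbove_eq hb
    simp [hv m]
  · simp

theorem det_gram_eq_norm_sq_mul (v : Fin (n + 1) → E) (k : Fin (n + 1)) (w : E)
    (hw : v k - w ∈ Submodule.span ℝ (Set.range (v ∘ k.succAbove)))
    (hperp : ∀ m, inner ℝ w (v (k.succAbove m)) = 0) :
    (gram ℝ v).det = ‖w‖ ^ 2 * (gram ℝ (v ∘ k.succAbove)).det := by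
  obtain ⟨c, hc⟩ := (Submodule.mem_span_range_iff_exists_fun ℝ).1 hw
  simp only [Function.comp_apply] at hc
  set v' := Function.update v k w
  have hv'k : v' k = w := Function.update_self ..
  have hv'sa (m : Fin n) : v' (k.succAbove m) = v (k.succAbove m) :=
    Function.update_of_ne (Fin.succAbove_ne k m) ..
  have hv : Function.update v' k (v' k + ∑ m, c m • v' (k.succAbove m)) = v := by
    ext a
    rcases eq_or_ne a k with rfl | ha
    · simp [hv'k, hv'sa, hc]
    · simp [v', ha]
  have hinv := det_gram_update_add_sum_succAbove v' k c
  rw [hv] at hinv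
  rw [hinv, det_gram_eq_norm_sq_mul_of_inner_eq_zero v' k (by simpa [hv'k, hv'sa] using hperp)]
  simp only [hv'k, Function.comp_def, hv'sa]

end Gram

end Matrix

open Matrix

section Simplex

variable {H : Type*} [NormedAddCommGroup H] [InnerProductSpace ℝ H]

theorem infDist_le_norm_sub_starProjection {L : AffineSubspace ℝ H} {p : H} (hp : p ∈ L)
    (K : Submodule ℝ H) [K.HasOrthogonalProjection] (hK : K ≤ L.direction) (q : H) :
    infDist q L ≤ ‖q - p - K.starProjection (q - p)‖ := by
  have hmem : K.starProjection (q - p) +ᵥ p ∈ L :=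
    AffineSubspace.vadd_mem_of_mem_direction (hK (K.starProjection_apply_mem _)) hp
  calc infDist q L ≤ dist q (K.starProjection (q - p) +ᵥ p) := infDist_le_dist_of_mem hmem
    _ = ‖q - p - K.starProjection (q - p)‖ := by
      rw [dist_eq_norm, vadd_eq_add]
      congr 1
      abel

theorem simplexContent_eq_sqrt_det_gram {n : ℕ} (y : Fin (n + 1) → H) :
    simplexContent n y = √(gram ℝ fun a : Fin n ↦ y a.succ - y 0).det := rfl

theorem simplexContent_nonneg {n : ℕ} (y : Fin (n + 1) → H) : 0 ≤ simplexContent n y :=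
  Real.sqrt_nonneg _

theorem simplexContent_eq_zero_of_eq {n : ℕ} {y : Fin (n + 1) → H} {j : Fin (n + 1)}
    (hj : j ≠ 0) (hy : y j = y 0) : simplexContent n y = 0 := by
  obtain ⟨m, rfl⟩ := Fin.exists_succ_eq.2 hj
  rw [simplexContent_eq_sqrt_det_gram, det_eq_zero_of_row_eq_zero m (by simp [hy]),
    Real.sqrt_zero]

theorem infDist_mul_simplexContent_le {n : ℕ} (y : Fin (n + 2) → H) {i : Fin (n + 2)}
    (hi : i ≠ 0) :
    infDist (y i) (affineSpan ℝ (Set.range (y ∘ i.succAbove)) : Set H) *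
        simplexContent n (y ∘ i.succAbove) ≤ simplexContent (n + 1) y := by
  set k := i.pred hi
  have hk : k.succ = i := Fin.succ_pred i hi
  set v : Fin (n + 1) → H := fun a ↦ y a.succ - y 0
  have hbase (a : Fin n) :
      (y ∘ i.succAbove) a.succ - (y ∘ i.succAbove) 0 = v (k.succAbove a) := by
    simp [v, ← hk]
  set K := Submodule.span ℝ (Set.range (v ∘ k.succAbove))
  have : FiniteDimensional ℝ K := FiniteDimensional.span_of_finite ℝ (Set.finite_range _)
  set w := v k - K.starProjection (v k)
  have hdet : (gram ℝ v).det = ‖w‖ ^ 2 * (gram ℝ (v ∘ k.succAbove)).det := by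
    refine det_gram_eq_norm_sq_mul v k w ?_ fun m ↦ ?_
    · rw [sub_sub_cancel]
      exact K.starProjection_apply_mem (v k)
    · exact K.inner_left_of_mem_orthogonal (Submodule.subset_span ⟨m, rfl⟩)
        (K.sub_starProjection_mem_orthogonal (v k))
  have hcontent : simplexContent (n + 1) y = ‖w‖ * simplexContent n (y ∘ i.succAbove) := by
    rw [simplexContent_eq_sqrt_det_gram, simplexContent_eq_sqrt_det_gram]
    simp only [hbase]
    rw [hdet, Real.sqrt_mul (sq_nonneg _), Real.sqrt_sq (norm_nonneg _)]
    rfl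
  have hK : K ≤ (affineSpan ℝ (Set.range (y ∘ i.succAbove))).direction := by
    rw [direction_affineSpan, Submodule.span_le]
    rintro _ ⟨a, rfl⟩
    rw [Function.comp_apply, ← hbase]
    exact vsub_mem_vectorSpan ℝ ⟨a.succ, rfl⟩ ⟨0, rfl⟩
  have hy0 : y 0 ∈ affineSpan ℝ (Set.range (y ∘ i.succAbove)) :=
    subset_affineSpan ℝ _ ⟨0, by simp [Fin.succAbove_ne_zero_zero hi]⟩
  have hdist := infDist_le_norm_sub_starProjection hy0 K hK (y i)
  rw [hcontent]
  gcongr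
  · exact simplexContent_nonneg _
  · simpa [v, w, ← hk] using hdist

end Simplex

theorem prod_dist_le_two_mul_pow {α ι : Type*} [PseudoMetricSpace α] (s : Finset ι)
    {X : ι → α} {x : α} {t : ℝ} (hX : ∀ j, X j ∈ closedBall x t) (j₀ : ι) :
    ∏ j ∈ s, dist (X j) (X j₀) ≤ (2 * t) ^ s.card := by
  rw [← prod_const]
  gcongr with j
  linarith [dist_triangle_right (X j) (X j₀) x, mem_closedBall.1 (hX j), mem_closedBall.1 (hX j₀)]

theorem polarSin_lower_bound_general {H : Type*} [NormedAddCommGroup H] [InnerProductSpace ℝ H]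
    (d : ℕ) (x : H) (t : ℝ) (ht : 0 < t)
    (X : Fin (d + 2) → H) (hX : ∀ j, X j ∈ closedBall x t)
    (ω : ℝ) (i : Fin (d + 2)) (hi : 1 ≤ (i : ℕ))
    (hcont : ω * t ^ d ≤ simplexContent d (X ∘ i.succAbove)) :
    ω / 2 ^ (d + 1) *
        (Metric.infDist (X i)
            ((affineSpan ℝ (Set.range (X ∘ i.succAbove)) : AffineSubspace ℝ H) : Set H) / t) ≤
      polarSin X 0 := by
  have hi0 : i ≠ 0 := by rintro rfl; simp at hi
  set D := infDist (X i) (affineSpan ℝ (Set.range (X ∘ i.succAbove)) : Set H)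
  have hD : 0 ≤ D := infDist_nonneg
  have hlow : ω / 2 ^ (d + 1) * (D / t) ≤ simplexContent (d + 1) X / (2 * t) ^ (d + 1) :=
    calc ω / 2 ^ (d + 1) * (D / t) = ω * t ^ d * D / (2 * t) ^ (d + 1) := by
          field_simp
          ring
      _ ≤ D * simplexContent d (X ∘ i.succAbove) / (2 * t) ^ (d + 1) := by
          rw [mul_comm D]
          gcongr
      _ ≤ simplexContent (d + 1) X / (2 * t) ^ (d + 1) := by
          gcongr
          exact infDist_mul_simplexContent_le X hi0
  have hP : 0 ≤ ∏ j ∈ univ.erase 0, dist (X j) (X 0) := prod_nonneg fun _ _ ↦ dist_nonneg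
  rcases hP.eq_or_lt with hP0 | hPpos
  · -- A vanishing edge gives `polarSin X 0` the junk value `0`, but also forces `M_{d+1}(X) = 0`.
    obtain ⟨j, hj, hXj⟩ := prod_eq_zero_iff.1 hP0.symm
    have h0 := simplexContent_eq_zero_of_eq (ne_of_mem_erase hj) (dist_eq_zero.1 hXj)
    simpa [polarSin, h0] using hlow
  · refine hlow.trans (div_le_div_of_nonneg_left (simplexContent_nonneg X) hPpos ?_)
    simpa using prod_dist_le_two_mul_pow (univ.erase 0) hX 0

/-- If X ∈ B(x,t)^{d+2} and M_d(X(i)) ≥ ω·t^d for some 0 < ω ≤ 1 and 1 ≤ i ≤ d+1, then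
p_d sin_{x₀}(X) ≥ (ω/2^{d+1}) · dist(x_i, L[X(i)])/t. -/
theorem polarSin_lower_bound {H : Type*} [NormedAddCommGroup H] [InnerProductSpace ℝ H]
    (d : ℕ) (hd : 1 ≤ d) (x : H) (t : ℝ) (ht : 0 < t)
    (X : Fin (d + 2) → H) (hX : ∀ j, X j ∈ closedBall x t)
    (ω : ℝ) (hω0 : 0 < ω) (hω1 : ω ≤ 1) (i : Fin (d + 2)) (hi : 1 ≤ (i : ℕ))
    (hcont : ω * t ^ d ≤ simplexContent d (X ∘ i.succAbove)) :
    ω / 2 ^ (d + 1) *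
        (Metric.infDist (X i)
            ((affineSpan ℝ (Set.range (X ∘ i.succAbove)) : AffineSubspace ℝ H) : Set H) / t) ≤
      polarSin X 0 :=
  polarSin_lower_bound_general d x t ht X hX ω i hi hcont
end
end

section
/- If X ∈ H^{d+2} with diam(X) > 0 is d-separated for ω > 0, i.e., min_{0≤i≤d+1} M_d(X(i)) ≥ ω · diam(X)^d, then X is 1-separated for ω, i.e., min(X)/diam(X) ≥ ω, where min(X) and diam(X) are the smallest and largest pairwise distances among the coordinates of X. -/
/-!
Take a closest pair `x i, x j` and a third index `k`. The content of the face `X(k)` is the square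
root of the Gram determinant of its edge vectors from one vertex; a shear, which leaves that
determinant unchanged, makes `x i - x j` one of them, and Hadamard's inequality then gives
`M_d(X(k)) ≤ min(X) · diam(X)^(d-1)`. Comparing with `ω · diam(X)^d ≤ M_d(X(k))` gives the claim.
-/

open Metric Finset

noncomputable section

/-- The largest pairwise distance among the coordinates of X. -/
def tdiam {H : Type*} [PseudoMetricSpace H] {n : ℕ} (X : Fin n → H) : ℝ :=
  Metric.diam (Set.range X)

open Matrix

theorem Matrix.PosSemidef.det_le_exp_trace_sub_card {n : Type*} [Fintype n] [DecidableEq n]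
    {A : Matrix n n ℝ} (hA : A.PosSemidef) : A.det ≤ Real.exp (A.trace - Fintype.card n) := by
  set μ := hA.isHermitian.eigenvalues
  have hdet : A.det = ∏ i, μ i := by simpa using hA.isHermitian.det_eq_prod_eigenvalues
  have htrace : A.trace = ∑ i, μ i := by simpa using hA.isHermitian.trace_eq_sum_eigenvalues
  calc A.det = ∏ i, μ i := hdet
    _ ≤ ∏ i, Real.exp (μ i - 1) :=
      Finset.prod_le_prod (fun i _ => hA.eigenvalues_nonneg i)
        (fun i _ => by linarith [Real.add_one_le_exp (μ i - 1)])
    _ = Real.exp (A.trace - Fintype.card n) := by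
      rw [← Real.exp_sum, Finset.sum_sub_distrib, htrace]; simp

section Gram

variable {H : Type*} [NormedAddCommGroup H] [InnerProductSpace ℝ H]

theorem gram_sum_smul {n : Type*} [Fintype n] (v : n → H) (P : Matrix n n ℝ) :
    gram ℝ (fun j => ∑ i, P i j • v i) = Pᵀ * gram ℝ v * P := by
  ext j l
  simp only [gram_apply, mul_apply, transpose_apply, sum_inner, inner_sum,
    real_inner_smul_left, real_inner_smul_right, Finset.sum_mul]
  exact Finset.sum_congr rfl fun _ _ => Finset.sum_congr rfl fun _ _ => by ring

theorem det_gram_sum_smul {n : Type*} [Fintype n] [DecidableEq n] (v : n → H)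
    (P : Matrix n n ℝ) :
    (gram ℝ (fun j => ∑ i, P i j • v i)).det = P.det ^ 2 * (gram ℝ v).det := by
  rw [gram_sum_smul, det_mul, det_mul, det_transpose]
  ring

theorem det_gram_update_sub {n : Type*} [Fintype n] [DecidableEq n] (v : n → H) {a b : n}
    (hab : a ≠ b) : (gram ℝ (Function.update v a (v a - v b))).det = (gram ℝ v).det := by
  have hcomb : Function.update v a (v a - v b) =
      fun j => ∑ i, transvection b a (-1 : ℝ) i j • v i := by
    ext j
    rcases eq_or_ne j a with rfl | hja
    · simp [transvection, single_apply, one_apply, Finset.sum_add_distrib, add_smul,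
        sub_eq_add_neg]
    · simp [transvection, one_apply, hja, Ne.symm hja]
  rw [hcomb, det_gram_sum_smul v (transvection b a (-1 : ℝ)),
    det_transvection_of_ne _ _ hab.symm, one_pow, one_mul]

theorem det_gram_le_one_of_norm_le_one {n : Type*} [Fintype n] [DecidableEq n] (u : n → H)
    (hu : ∀ i, ‖u i‖ ≤ 1) : (gram ℝ u).det ≤ 1 := by
  have htrace : (gram ℝ u).trace ≤ Fintype.card n := by
    rw [trace, ← Finset.card_univ, Finset.card_eq_sum_ones, Nat.cast_sum, Nat.cast_one]
    refine Finset.sum_le_sum fun i _ => ?_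
    rw [diag_apply, gram_apply, real_inner_self_eq_norm_sq]
    nlinarith [hu i, norm_nonneg (u i)]
  calc (gram ℝ u).det ≤ Real.exp ((gram ℝ u).trace - Fintype.card n) :=
        (posSemidef_gram ℝ u).det_le_exp_trace_sub_card
    _ ≤ 1 := Real.exp_le_one_iff.2 (by linarith)

theorem det_gram_le_prod_norm_sq {n : Type*} [Fintype n] [DecidableEq n] (v : n → H) :
    (gram ℝ v).det ≤ ∏ i, ‖v i‖ ^ 2 := by
  set u : n → H := fun i => ‖v i‖⁻¹ • v i
  have hu : ∀ i, ‖u i‖ ≤ 1 := fun i => by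
    rcases eq_or_ne (v i) 0 with h | h
    · simp [u, h]
    · exact (norm_smul_inv_norm h).le
  have hv : v = fun j => ∑ i, diagonal (fun i => ‖v i‖) i j • u i := by
    ext j
    rcases eq_or_ne (v j) 0 with h | h
    · simp [u, diagonal_apply, h]
    · simp [u, diagonal_apply, smul_smul, h]
  calc (gram ℝ v).det = (∏ i, ‖v i‖) ^ 2 * (gram ℝ u).det := by
        conv_lhs => rw [hv]
        rw [det_gram_sum_smul, det_diagonal]
    _ ≤ (∏ i, ‖v i‖) ^ 2 * 1 := by gcongr; exact det_gram_le_one_of_norm_le_one u hu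
    _ = ∏ i, ‖v i‖ ^ 2 := by rw [mul_one, Finset.prod_pow]

theorem sqrt_det_gram_le_of_norm_le {n : ℕ} (u : Fin n → H) {t : Fin n} {m M : ℝ}
    (hM : 0 ≤ M) (ht : ‖u t‖ ≤ m) (hs : ∀ s ≠ t, ‖u s‖ ≤ M) :
    √(gram ℝ u).det ≤ m * M ^ (n - 1) := by
  have hm : 0 ≤ m := (norm_nonneg _).trans ht
  refine Real.sqrt_le_iff.2 ⟨by positivity, ?_⟩
  calc (gram ℝ u).det ≤ ∏ i, ‖u i‖ ^ 2 := det_gram_le_prod_norm_sq u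
    _ = ‖u t‖ ^ 2 * ∏ i ∈ Finset.univ.erase t, ‖u i‖ ^ 2 :=
      (Finset.mul_prod_erase _ _ (Finset.mem_univ t)).symm
    _ ≤ m ^ 2 * ∏ _i ∈ Finset.univ.erase t, M ^ 2 := by
      gcongr with s hs'
      exact hs s (Finset.ne_of_mem_erase hs')
    _ = (m * M ^ (n - 1)) ^ 2 := by
      rw [Finset.prod_const, Finset.card_erase_of_mem (Finset.mem_univ t), Finset.card_univ,
        Fintype.card_fin]
      ring

theorem simplexContent_le_of_dist_le {d : ℕ} (y : Fin (d + 1) → H) {m M : ℝ} (hM : 0 ≤ M)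
    (hy : ∀ s t, dist (y s) (y t) ≤ M) {a b : Fin (d + 1)} (hab : a ≠ b)
    (hm : dist (y a) (y b) ≤ m) : simplexContent d y ≤ m * M ^ (d - 1) := by
  wlog hb : b ≠ 0 generalizing a b
  · exact this hab.symm (by rwa [dist_comm]) (by rintro rfl; exact hb hab.symm)
  set u : Fin d → H := fun s => y s.succ - y 0
  set t := b.pred hb
  -- the edge vector `u t = y b - y 0` is sheared into `y b - y a`
  have hdet : (gram ℝ (Function.update u t (y b - y a))).det = (gram ℝ u).det := by
    rcases eq_or_ne a 0 with rfl | ha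
    · rw [show y b - y 0 = u t by simp [u, t], Function.update_eq_self]
    · have hta : t ≠ a.pred ha := fun h => hab (by simpa [t] using (congrArg Fin.succ h).symm)
      convert det_gram_update_sub u hta using 4
      simp [u, t]
  change √(gram ℝ u).det ≤ _
  rw [← hdet]
  refine sqrt_det_gram_le_of_norm_le _ hM (t := t) ?_ fun s hs => ?_
  · rw [Function.update_self, ← dist_eq_norm, dist_comm]
    exact hm
  · rw [Function.update_of_ne hs, ← dist_eq_norm]
    exact hy _ _

end Gram

section Distances

variable {α : Type*} [PseudoMetricSpace α]

theorem exists_dist_eq_tmin {n : ℕ} (X : Fin n → α) (hn : 1 < n) :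
    ∃ i j, i ≠ j ∧ dist (X i) (X j) = tmin X := by
  have hfin : {r | ∃ i j, i ≠ j ∧ r = dist (X i) (X j)}.Finite :=
    (Set.finite_range fun p : Fin n × Fin n => dist (X p.1) (X p.2)).subset
      fun _ ⟨i, j, _, hr⟩ => ⟨(i, j), hr.symm⟩
  have hne : {r | ∃ i j, i ≠ j ∧ r = dist (X i) (X j)}.Nonempty :=
    ⟨_, ⟨0, by omega⟩, ⟨1, hn⟩, by simp [Fin.ext_iff], rfl⟩
  obtain ⟨i, j, hij, h⟩ := hne.csInf_mem hfin
  exact ⟨i, j, hij, h.symm⟩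

theorem dist_le_tdiam {n : ℕ} (X : Fin n → α) (i j : Fin n) : dist (X i) (X j) ≤ tdiam X :=
  dist_le_diam_of_mem (Set.finite_range X).isBounded ⟨i, rfl⟩ ⟨j, rfl⟩

end Distances

theorem d_separated_implies_one_separated_general {H : Type*} [NormedAddCommGroup H]
    [InnerProductSpace ℝ H] (d : ℕ) (hd : 1 ≤ d) (X : Fin (d + 2) → H)
    (ω : ℝ) (hdiam : 0 < tdiam X)
    (hsep : ∀ i : Fin (d + 2), ω * tdiam X ^ d ≤ simplexContent d (X ∘ i.succAbove)) :
    ω ≤ tmin X / tdiam X := by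
  obtain ⟨i, j, hij, hmin⟩ := exists_dist_eq_tmin X (by omega)
  obtain ⟨k, hki, hkj⟩ := Fin.exists_ne_and_ne_of_two_lt i j (by omega)
  obtain ⟨a, rfl⟩ := Fin.exists_succAbove_eq hki.symm
  obtain ⟨b, rfl⟩ := Fin.exists_succAbove_eq hkj.symm
  have hface : simplexContent d (X ∘ k.succAbove) ≤ tmin X * tdiam X ^ (d - 1) :=
    simplexContent_le_of_dist_le _ hdiam.le (fun _ _ => dist_le_tdiam X _ _)
      (fun h => hij (congrArg _ h)) hmin.le
  have hscaled : ω * tdiam X * tdiam X ^ (d - 1) ≤ tmin X * tdiam X ^ (d - 1) :=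
    calc ω * tdiam X * tdiam X ^ (d - 1) = ω * tdiam X ^ d := by
          rw [mul_assoc, ← pow_succ', Nat.sub_add_cancel hd]
      _ ≤ tmin X * tdiam X ^ (d - 1) := (hsep k).trans hface
  rw [le_div_iff₀ hdiam]
  exact le_of_mul_le_mul_right hscaled (pow_pos hdiam _)

/-- If X is d-separated for ω (all faces X(i) satisfy M_d(X(i)) ≥ ω·diam(X)^d), then
X is 1-separated for ω: min(X)/diam(X) ≥ ω. -/
theorem d_separated_implies_one_separated {H : Type*} [NormedAddCommGroup H]
    [InnerProductSpace ℝ H] (d : ℕ) (hd : 1 ≤ d) (X : Fin (d + 2) → H)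
    (ω : ℝ) (hω : 0 < ω) (hdiam : 0 < tdiam X)
    (hsep : ∀ i : Fin (d + 2), ω * tdiam X ^ d ≤ simplexContent d (X ∘ i.succAbove)) :
    ω ≤ tmin X / tdiam X :=
  d_separated_implies_one_separated_general d hd X ω hdiam hsep
end
end

section
/- Let μ be a d-regular measure on a Hilbert space H with regularity constant C_μ, let 1 ≤ m < d be an integer, 0 ≤ ε ≤ 1, and L an m-dimensional affine subspace of H. Then for all x ∈ supp(μ) ∩ L and 0 < t ≤ diam(supp(μ)), μ(Tube(L, ε·t) ∩ B(x,t)) ≤ 2^{m + 3d/2} · C_μ · ε^{d−m} · t^d, where Tube(L, η) = {y ∈ H : dist(y, L) ≤ η}. -/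
open MeasureTheory Metric

/-- The (closed) support of a measure. -/
def msupport {H : Type*} [MetricSpace H] [MeasurableSpace H] (μ : Measure H) : Set H :=
  {x | ∀ r : ℝ, 0 < r → 0 < μ (closedBall x r)}

def IsDRegular {H : Type*} [MetricSpace H] [MeasurableSpace H] (d : ℕ) (Cμ : ℝ)
    (μ : Measure H) : Prop :=
  1 ≤ Cμ ∧ ∀ x ∈ msupport μ, ∀ t : ℝ, 0 < t →
    ENNReal.ofReal t ≤ EMetric.diam (msupport μ) →
      ENNReal.ofReal (Cμ⁻¹ * t ^ d) ≤ μ (closedBall x t) ∧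
        μ (closedBall x t) ≤ ENNReal.ofReal (Cμ * t ^ d)

/-!
Let `π` be the orthogonal projection onto the direction of `L`, based at `x`. By Pythagoras, two
points of `Tube(L, εt)` at distance more than `√8 εt` have projections more than `2εt` apart, and
`π` maps `B(x, t)` into a ball of radius `t`. A volume comparison in the `m`-dimensional direction
space therefore bounds the number of `√8 εt`-separated points of `Tube(L, εt) ∩ B(x, t)` by
`((t + εt) / εt)^m ≤ (2 / ε)^m`. A maximal such family inside `supp μ` covers the tube, up to a
`μ`-null set, by balls centred on `supp μ`, each of measure at most `Cμ (√8 εt)^d`; as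
`√8^d = 2^{3d/2}` this is the claimed bound for `ε > 0`, and letting `ε → 0` gives `ε ≤ 0`.
-/

open Filter Topology
open scoped NNReal ENNReal

section Regular

variable {H : Type*} [MetricSpace H] [MeasurableSpace H]

theorem msupport_eq_support (μ : Measure H) : msupport μ = μ.support := by
  ext x
  exact (nhds_basis_closedBall.mem_measureSupport).symm

variable [SecondCountableTopology H]

theorem measure_compl_msupport (μ : Measure H) : μ (msupport μ)ᶜ = 0 := by
  rw [msupport_eq_support]
  exact Measure.measure_compl_support

variable {d : ℕ} {Cμ : ℝ} {μ : Measure H}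

-- Past the diameter of the support, a ball carries no more mass than the ball of radius the
-- diameter.
theorem IsDRegular.measure_closedBall_le (hreg : IsDRegular d Cμ μ)
    (hdiam : ediam (msupport μ) ≠ 0) {q : H} (hq : q ∈ msupport μ) {s : ℝ} (hs : 0 < s) :
    μ (closedBall q s) ≤ ENNReal.ofReal (Cμ * s ^ d) := by
  by_cases hsD : ENNReal.ofReal s ≤ ediam (msupport μ)
  · exact (hreg.2 q hq s hs hsD).2
  replace hsD := not_le.1 hsD
  set D := (ediam (msupport μ)).toReal
  have hD : ENNReal.ofReal D = ediam (msupport μ) := ENNReal.ofReal_toReal hsD.ne_top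
  have hD0 : 0 < D := ENNReal.toReal_pos hdiam hsD.ne_top
  have hDs : D ≤ s := (ENNReal.toReal_lt_of_lt_ofReal hsD).le
  have hC0 : 0 ≤ Cμ := zero_le_one.trans hreg.1
  calc μ (closedBall q s) = μ (closedBall q s ∩ msupport μ) :=
        (measure_inter_conull (measure_compl_msupport μ)).symm
    _ ≤ μ (closedBall q D) :=
        measure_mono fun z hz => mem_closedBall.2 (dist_le_diam_of_mem' hsD.ne_top hz.2 hq)
    _ ≤ ENNReal.ofReal (Cμ * D ^ d) := (hreg.2 q hq D hD0 hD.le).2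
    _ ≤ ENNReal.ofReal (Cμ * s ^ d) := by gcongr

theorem IsDRegular.measure_le_coveringNumber_mul (hreg : IsDRegular d Cμ μ)
    (hdiam : ediam (msupport μ) ≠ 0) (S : Set H) {s : ℝ≥0} (hs : 0 < s) :
    μ S ≤ coveringNumber s (S ∩ msupport μ) * ENNReal.ofReal (Cμ * s ^ d) := by
  by_cases hN : coveringNumber s (S ∩ msupport μ) = ⊤
  · have : 0 < Cμ * (s : ℝ) ^ d := mul_pos (zero_lt_one.trans_le hreg.1) (pow_pos hs d)
    simp [hN, ENNReal.top_mul (ENNReal.ofReal_pos.2 this).ne']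
  obtain ⟨N, hNS, hNfin, hNcov, hNcard⟩ := exists_set_encard_eq_coveringNumber hN
  rw [← hNcard, hNfin.encard_eq_coe_toFinset_card, ENat.toENNReal_coe]
  calc μ S = μ (S ∩ msupport μ) := (measure_inter_conull (measure_compl_msupport μ)).symm
    _ ≤ μ (⋃ c ∈ hNfin.toFinset, closedBall c s) := by
        refine measure_mono ((isCover_iff_subset_iUnion_closedBall.1 hNcov).trans ?_)
        simp
    _ ≤ ∑ c ∈ hNfin.toFinset, μ (closedBall c s) := measure_biUnion_finset_le _ _
    _ ≤ ∑ _c ∈ hNfin.toFinset, ENNReal.ofReal (Cμ * s ^ d) := by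
        refine Finset.sum_le_sum fun c hc => hreg.measure_closedBall_le hdiam ?_ hs
        exact (hNS (hNfin.mem_toFinset.1 hc)).2
    _ = _ := by rw [Finset.sum_const, nsmul_eq_mul]

end Regular

theorem coe_lt_edist_iff {X : Type*} [PseudoMetricSpace X] {x y : X} {ε : ℝ≥0} :
    (ε : ℝ≥0∞) < edist x y ↔ (ε : ℝ) < dist x y := by
  rw [edist_nndist, ENNReal.coe_lt_coe, ← NNReal.coe_lt_coe, coe_nndist]

theorem packingNumber_le_of_forall_finset_card_le {X : Type*} [PseudoEMetricSpace X]
    {ε : ℝ≥0} {A : Set X} (N : ℕ)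
    (h : ∀ C : Finset X, ↑C ⊆ A → IsSeparated ε (C : Set X) → C.card ≤ N) :
    packingNumber ε A ≤ N := by
  refine iSup_le fun C => iSup_le fun hCA => iSup_le fun hC => ?_
  by_cases hfin : C.Finite
  · rw [hfin.encard_eq_coe_toFinset_card]
    exact_mod_cast h _ (by simpa using hCA) (by simpa using hC)
  · obtain ⟨D, hDC, hD⟩ := Set.Infinite.exists_subset_card_eq hfin (N + 1)
    have := h D (hDC.trans hCA) (hC.subset hDC)
    omega

theorem packingNumber_le_of_mapsTo {X Y : Type*} [PseudoEMetricSpace X] [PseudoEMetricSpace Y]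
    {f : X → Y} {A : Set X} {B : Set Y} {ε δ : ℝ≥0} (hf : Set.MapsTo f A B)
    (hsep : ∀ x ∈ A, ∀ y ∈ A, (ε : ℝ≥0∞) < edist x y → (δ : ℝ≥0∞) < edist (f x) (f y)) :
    packingNumber ε A ≤ packingNumber δ B := by
  refine iSup_le fun C => iSup_le fun hCA => iSup_le fun hC => ?_
  have hinj : Set.InjOn f C := fun x hx y hy hxy => by
    by_contra hne
    simpa [hxy] using hsep x (hCA hx) y (hCA hy) (hC hx hy hne)
  rw [← hinj.encard_image]
  refine le_iSup_of_le (f '' C) (le_iSup_of_le (hf.mono_left hCA).image_subset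
    (le_iSup_of_le ?_ le_rfl))
  rintro _ ⟨x, hx, rfl⟩ _ ⟨y, hy, rfl⟩ hne
  exact hsep x (hCA hx) y (hCA hy) (hC hx hy (ne_of_apply_ne f hne))

section FiniteDimensional

variable {E : Type*} [NormedAddCommGroup E] [NormedSpace ℝ E] [FiniteDimensional ℝ E]

theorem card_mul_pow_le_of_isSeparated {C : Finset E} {a : E} {R : ℝ} {ρ : ℝ≥0} (hρ : 0 < ρ)
    (hR : 0 ≤ R) (hCa : (C : Set E) ⊆ closedBall a R) (hC : IsSeparated (2 * ρ) (C : Set E)) :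
    C.card * (ρ : ℝ) ^ Module.finrank ℝ E ≤ (R + ρ) ^ Module.finrank ℝ E := by
  have hρ' : (0 : ℝ) < ρ := hρ
  borelize E
  set μ : Measure E := Measure.addHaar
  have hdisj : (C : Set E).PairwiseDisjoint (fun c => ball c ρ) := by
    intro c hc c' hc' hne
    refine ball_disjoint_ball ?_
    have := coe_lt_edist_iff.1 (hC hc hc' hne)
    push_cast at this
    linarith
  have hsub : (⋃ c ∈ C, ball c ρ) ⊆ ball a (R + ρ) := by
    simp only [Set.iUnion_subset_iff]
    exact fun c hc => ball_subset_ball' (by linarith [mem_closedBall.1 (hCa hc)])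
  have hvol : (C.card : ℝ≥0∞) * (ENNReal.ofReal (ρ ^ Module.finrank ℝ E) * μ (ball 0 1)) ≤
      ENNReal.ofReal ((R + ρ) ^ Module.finrank ℝ E) * μ (ball 0 1) :=
    calc (C.card : ℝ≥0∞) * (ENNReal.ofReal (ρ ^ Module.finrank ℝ E) * μ (ball 0 1))
        = ∑ c ∈ C, μ (ball c ρ) := by simp [μ.addHaar_ball_of_pos _ hρ']
      _ = μ (⋃ c ∈ C, ball c ρ) :=
        (measure_biUnion_finset hdisj fun _ _ => measurableSet_ball).symm
      _ ≤ μ (ball a (R + ρ)) := measure_mono hsub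
      _ = _ := μ.addHaar_ball_of_pos _ (by positivity)
  rwa [← mul_assoc, ENNReal.mul_le_mul_iff_left (measure_ball_pos μ _ one_pos).ne'
    measure_ball_lt_top.ne, ← ENNReal.ofReal_natCast, ← ENNReal.ofReal_mul (by positivity),
    ENNReal.ofReal_le_ofReal_iff (by positivity)] at hvol

theorem packingNumber_closedBall_le (a : E) {R : ℝ} {ρ : ℝ≥0} (hρ : 0 < ρ) (hR : 0 ≤ R) :
    (packingNumber (2 * ρ) (closedBall a R) : ℝ≥0∞) ≤
      ENNReal.ofReal (((R + ρ) / ρ) ^ Module.finrank ℝ E) := by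
  have hρ' : (0 : ℝ) < ρ := hρ
  calc (packingNumber (2 * ρ) (closedBall a R) : ℝ≥0∞)
      ≤ (⌊((R + ρ) / ρ) ^ Module.finrank ℝ E⌋₊ : ℕ∞) := by
        refine ENat.toENNReal_le.2 (packingNumber_le_of_forall_finset_card_le _ fun C hCa hC => ?_)
        rw [Nat.le_floor_iff (by positivity), div_pow, le_div_iff₀ (by positivity)]
        exact card_mul_pow_le_of_isSeparated hρ hR hCa hC
    _ ≤ ENNReal.ofReal (((R + ρ) / ρ) ^ Module.finrank ℝ E) := by
        rw [ENat.toENNReal_coe, ← ENNReal.ofReal_natCast]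
        exact ENNReal.ofReal_le_ofReal (Nat.floor_le (by positivity))

end FiniteDimensional

section Projection

variable {E : Type*} [NormedAddCommGroup E] [InnerProductSpace ℝ E]

theorem Submodule.norm_sub_sq_le_norm_starProjection_sub_sq_add (K : Submodule ℝ E)
    [K.HasOrthogonalProjection] (v w : E) :
    ‖v - w‖ ^ 2 ≤ ‖K.starProjection (v - w)‖ ^ 2 +
      (‖v - K.starProjection v‖ + ‖w - K.starProjection w‖) ^ 2 := by
  rw [norm_sq_eq_add_norm_sq_starProjection (v - w) K, starProjection_orthogonal_val, map_sub,
    sub_sub_sub_comm]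
  gcongr
  exact norm_sub_le _ _

theorem AffineSubspace.infDist_eq_norm_sub_starProjection {L : AffineSubspace ℝ E}
    [L.direction.HasOrthogonalProjection] {x : E} (hx : x ∈ L) (p : E) :
    infDist p L = ‖(p - x) - L.direction.starProjection (p - x)‖ := by
  have : Nonempty L := ⟨⟨x, hx⟩⟩
  rw [← EuclideanGeometry.dist_orthogonalProjection_eq_infDist,
    EuclideanGeometry.orthogonalProjection_apply_mem L hx, dist_eq_norm]
  simp only [vsub_eq_sub, vadd_eq_add, Submodule.coe_orthogonalProjectionOnto_apply]
  congr 1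
  abel

theorem packingNumber_le_of_subset_tube {L : AffineSubspace ℝ E}
    [L.direction.HasOrthogonalProjection] {x : E} (hxL : x ∈ L) {r : ℝ≥0} {t : ℝ} {S : Set E}
    (hS : S ⊆ {y | infDist y L ≤ r} ∩ closedBall x t) :
    packingNumber (NNReal.sqrt 8 * r) S ≤
      packingNumber (2 * r) (closedBall (0 : L.direction) t) := by
  refine packingNumber_le_of_mapsTo (f := fun y => L.direction.orthogonalProjectionOnto (y - x))
    (fun y hy => ?_) (fun y hy z hz hyz => ?_)
  · rw [mem_closedBall_zero_iff]
    exact (L.direction.norm_orthogonalProjectionOnto_apply_le _).trans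
      (mem_closedBall_iff_norm.1 (hS hy).2)
  rw [coe_lt_edist_iff] at hyz ⊢
  push_cast at hyz ⊢
  rw [dist_eq_norm, ← map_sub, sub_sub_sub_cancel_right, Submodule.coe_norm,
    Submodule.coe_orthogonalProjectionOnto_apply]
  have hpyth := L.direction.norm_sub_sq_le_norm_starProjection_sub_sq_add (y - x) (z - x)
  rw [← AffineSubspace.infDist_eq_norm_sub_starProjection hxL,
    ← AffineSubspace.infDist_eq_norm_sub_starProjection hxL, sub_sub_sub_cancel_right,
    ← dist_eq_norm] at hpyth
  have hfar : 8 * (r : ℝ) ^ 2 < dist y z ^ 2 := by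
    calc 8 * (r : ℝ) ^ 2 = (√8 * r) ^ 2 := by rw [mul_pow, Real.sq_sqrt (by norm_num)]
      _ < dist y z ^ 2 := by gcongr
  have hnear : (infDist y L + infDist z L) ^ 2 ≤ (2 * r) ^ 2 := by
    gcongr
    · exact add_nonneg infDist_nonneg infDist_nonneg
    · have hy' : infDist y L ≤ r := (hS hy).1
      have hz' : infDist z L ≤ r := (hS hz).1
      linarith
  exact lt_of_pow_lt_pow_left₀ 2 (norm_nonneg _) (by nlinarith)

end Projection

theorem two_rpow_add_three_mul_div_two (m d : ℕ) :
    (2 : ℝ) ^ ((m : ℝ) + 3 * (d : ℝ) / 2) = 2 ^ m * √8 ^ d := by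
  have h8 : √8 = (2 : ℝ) ^ ((3 : ℝ) / 2) := by
    rw [Real.sqrt_eq_rpow, show (8 : ℝ) = 2 ^ (3 : ℝ) by norm_num, ← Real.rpow_mul (by norm_num)]
    norm_num
  rw [h8, ← Real.rpow_natCast, ← Real.rpow_natCast, ← Real.rpow_mul (by norm_num),
    ← Real.rpow_add (by norm_num)]
  ring_nf

theorem div_pow_mul_sqrt_eight_mul_pow_le {m d : ℕ} (hmd : m ≤ d) {C ε t : ℝ} (hC : 0 ≤ C)
    (hε0 : 0 < ε) (hε1 : ε ≤ 1) (ht : 0 < t) :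
    ((t + ε * t) / (ε * t)) ^ m * (C * (√8 * (ε * t)) ^ d) ≤
      2 ^ ((m : ℝ) + 3 * (d : ℝ) / 2) * C * ε ^ (d - m) * t ^ d := by
  have hε : ε ^ d = ε ^ (d - m) * ε ^ m := by rw [← pow_add, Nat.sub_add_cancel hmd]
  rw [two_rpow_add_three_mul_div_two]
  calc ((t + ε * t) / (ε * t)) ^ m * (C * (√8 * (ε * t)) ^ d)
      = (1 + ε) ^ m * (√8 ^ d * C * ε ^ (d - m) * t ^ d) := by
        rw [mul_pow √8, mul_pow ε, hε, show t + ε * t = (1 + ε) * t by ring,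
          mul_div_mul_right _ _ ht.ne', div_pow]
        field_simp
    _ ≤ 2 ^ m * (√8 ^ d * C * ε ^ (d - m) * t ^ d) := by gcongr; linarith
    _ = 2 ^ m * √8 ^ d * C * ε ^ (d - m) * t ^ d := by ring

theorem ENNReal.eq_zero_of_forall_le_ofReal_mul_pow {x : ℝ≥0∞} {a : ℝ} {k : ℕ} (hk : k ≠ 0)
    (h : ∀ c : ℝ, 0 < c → c ≤ 1 → x ≤ ENNReal.ofReal (a * c ^ k)) : x = 0 := by
  have htend : Tendsto (fun c : ℝ => ENNReal.ofReal (a * c ^ k)) (𝓝[>] 0) (𝓝 0) := by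
    have : Continuous fun c : ℝ => ENNReal.ofReal (a * c ^ k) :=
      ENNReal.continuous_ofReal.comp (by fun_prop)
    simpa [zero_pow hk] using (this.tendsto 0).mono_left nhdsWithin_le_nhds
  refine nonpos_iff_eq_zero.1 (ge_of_tendsto htend ?_)
  filter_upwards [Ioc_mem_nhdsGT zero_lt_one] with c hc using h c hc.1 hc.2

theorem measure_tube_inter_closedBall_le_of_pos {H : Type*} [NormedAddCommGroup H]
    [InnerProductSpace ℝ H] [SecondCountableTopology H] [MeasurableSpace H] {d : ℕ} {Cμ : ℝ}
    {μ : Measure H} (hreg : IsDRegular d Cμ μ) (hdiam : ediam (msupport μ) ≠ 0) {m : ℕ}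
    (hmd : m ≤ d) {ε : ℝ} (hε0 : 0 < ε) (hε1 : ε ≤ 1) {L : AffineSubspace ℝ H}
    [FiniteDimensional ℝ L.direction] (hL : Module.finrank ℝ L.direction = m) {x : H}
    (hxL : x ∈ L) {t : ℝ} (ht : 0 < t) :
    μ ({y | infDist y (L : Set H) ≤ ε * t} ∩ closedBall x t) ≤
      ENNReal.ofReal ((2 : ℝ) ^ ((m : ℝ) + 3 * (d : ℝ) / 2) * Cμ * ε ^ (d - m) * t ^ d) := by
  set r : ℝ≥0 := ⟨ε * t, by positivity⟩
  have hr : 0 < r := show (0 : ℝ) < ε * t by positivity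
  have hs : ((NNReal.sqrt 8 * r : ℝ≥0) : ℝ) = √8 * (ε * t) := by
    change (NNReal.sqrt 8 : ℝ) * (ε * t) = _
    rw [Real.coe_sqrt, NNReal.coe_ofNat]
  set A := {y | infDist y (L : Set H) ≤ ε * t} ∩ closedBall x t
  calc μ A ≤ coveringNumber (NNReal.sqrt 8 * r) (A ∩ msupport μ) *
        ENNReal.ofReal (Cμ * (√8 * (ε * t)) ^ d) := by
        rw [← hs]
        exact hreg.measure_le_coveringNumber_mul hdiam A (by positivity)
    _ ≤ packingNumber (2 * r) (closedBall (0 : L.direction) t) *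
        ENNReal.ofReal (Cμ * (√8 * (ε * t)) ^ d) := by
        gcongr
        exact (coveringNumber_le_packingNumber _ _).trans
          (packingNumber_le_of_subset_tube hxL Set.inter_subset_left)
    _ ≤ ENNReal.ofReal (((t + ε * t) / (ε * t)) ^ m) *
        ENNReal.ofReal (Cμ * (√8 * (ε * t)) ^ d) := by
        rw [← hL]
        gcongr
        exact packingNumber_closedBall_le 0 hr ht.le
    _ ≤ _ := by
        rw [← ENNReal.ofReal_mul (by positivity)]
        exact ENNReal.ofReal_le_ofReal
          (div_pow_mul_sqrt_eight_mul_pow_le hmd (zero_le_one.trans hreg.1) hε0 hε1 ht)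

theorem tube_measure_bound_general {H : Type*} [NormedAddCommGroup H] [InnerProductSpace ℝ H]
    [SecondCountableTopology H] [MeasurableSpace H]
    (d : ℕ)
    (Cμ : ℝ) (μ : Measure H) (hreg : IsDRegular d Cμ μ)
    (m : ℕ) (hm1 : 1 ≤ m) (hmd : m < d) (ε : ℝ) (hε1 : ε ≤ 1)
    (L : AffineSubspace ℝ H) (hL : Module.finrank ℝ L.direction = m)
    (x : H) (hxL : x ∈ L)
    (t : ℝ) (ht : 0 < t) (htd : ENNReal.ofReal t ≤ EMetric.diam (msupport μ)) :
    μ ({y | Metric.infDist y (L : Set H) ≤ ε * t} ∩ closedBall x t) ≤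
      ENNReal.ofReal ((2 : ℝ) ^ ((m : ℝ) + 3 * (d : ℝ) / 2) * Cμ * ε ^ (d - m) * t ^ d) := by
  have : FiniteDimensional ℝ L.direction := .of_finrank_pos (by omega)
  have hdiam : ediam (msupport μ) ≠ 0 := ((ENNReal.ofReal_pos.2 ht).trans_le htd).ne'
  rcases lt_or_ge 0 ε with hε0 | hε0
  · exact measure_tube_inter_closedBall_le_of_pos hreg hdiam hmd.le hε0 hε1 hL hxL ht
  set K := (2 : ℝ) ^ ((m : ℝ) + 3 * (d : ℝ) / 2)
  have hnull : μ ({y | infDist y (L : Set H) ≤ ε * t} ∩ closedBall x t) = 0 := by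
    refine ENNReal.eq_zero_of_forall_le_ofReal_mul_pow (a := K * Cμ * t ^ d)
      (Nat.sub_ne_zero_of_lt hmd) fun c hc0 hc1 => ?_
    calc μ ({y | infDist y (L : Set H) ≤ ε * t} ∩ closedBall x t)
        ≤ μ ({y | infDist y (L : Set H) ≤ c * t} ∩ closedBall x t) :=
          measure_mono fun y hy =>
            ⟨(hy.1 : infDist y L ≤ ε * t).trans
              (mul_le_mul_of_nonneg_right (hε0.trans hc0.le) ht.le), hy.2⟩
      _ ≤ ENNReal.ofReal (K * Cμ * c ^ (d - m) * t ^ d) :=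
          measure_tube_inter_closedBall_le_of_pos hreg hdiam hmd.le hc0 hc1 hL hxL ht
      _ = ENNReal.ofReal (K * Cμ * t ^ d * c ^ (d - m)) := by ring_nf
  simp [hnull]

/-- Tube bound: for 1 ≤ m < d, 0 ≤ ε ≤ 1 and an m-dimensional affine subspace L,
μ(Tube(L, ε·t) ∩ B(x,t)) ≤ 2^{m+3d/2}·Cμ·ε^{d−m}·t^d for x ∈ supp(μ)∩L,
0 < t ≤ diam(supp μ). -/
theorem tube_measure_bound {H : Type*} [NormedAddCommGroup H] [InnerProductSpace ℝ H]
    [CompleteSpace H] [SecondCountableTopology H] [MeasurableSpace H] [BorelSpace H]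
    (d : ℕ) (hdim : (d : Cardinal) < Module.rank ℝ H)
    (Cμ : ℝ) (μ : Measure H) (hreg : IsDRegular d Cμ μ)
    (m : ℕ) (hm1 : 1 ≤ m) (hmd : m < d) (ε : ℝ) (hε0 : 0 ≤ ε) (hε1 : ε ≤ 1)
    (L : AffineSubspace ℝ H) (hL : Module.finrank ℝ L.direction = m)
    (x : H) (hx : x ∈ msupport μ) (hxL : x ∈ L)
    (t : ℝ) (ht : 0 < t) (htd : ENNReal.ofReal t ≤ EMetric.diam (msupport μ)) :
    μ ({y | Metric.infDist y (L : Set H) ≤ ε * t} ∩ closedBall x t) ≤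
      ENNReal.ofReal ((2 : ℝ) ^ ((m : ℝ) + 3 * (d : ℝ) / 2) * Cμ * ε ^ (d - m) * t ^ d) :=
  tube_measure_bound_general d Cμ μ hreg m hm1 hmd ε hε1 L hL x hxL t ht htd
end

section
/- Let μ be a d-regular measure on a Hilbert space H. There exists a constant ε > 0 depending only on d and C_μ such that for any x ∈ supp(μ), 0 < t ≤ diam(supp(μ)), and any m-dimensional affine subspace L of H with 1 ≤ m < d and x ∈ L, the set (B(x,t) ∩ supp(μ)) \ Tube(L, ε·t) is nonempty; in particular μ(B(x,t) \ Tube(L, ε·t)) > (1/2)·μ(B(x,t)) for ε = (2^{−(3d/2 + m + 1)} C_μ^{−2})^{1/(d−m)}. -/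
open MeasureTheory Metric

/-! Points of `B(x,t) ∩ supp μ` within `η = εt` of the `m`-plane `L` are covered by the balls of
radius `2√2 η` around a maximal `2√2 η`-separated family of such points. By Pythagoras the
orthogonal projections of this family onto `L` are `2η`-separated inside an `m`-dimensional ball of
radius `t`, so comparing volumes there bounds its size by `((t + η) / η) ^ m`. Upper regularity
then bounds the mass of the tube part of `B(x,t)` by `((1 + ε) / ε) ^ m · Cμ (2√2 εt) ^ d`, which
for the chosen `ε` is less than half of the lower bound `Cμ⁻¹ t ^ d` for `μ(B(x,t))`. So more than
half of `μ(B(x,t))` lies outside the tube, and as `μ` is carried by its support, that part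
contains a point of the support. -/

open Module

theorem Metric.isSeparated_ofReal_iff {X : Type*} [PseudoMetricSpace X] {r : ℝ} (hr : 0 ≤ r)
    {s : Set X} : IsSeparated (ENNReal.ofReal r) s ↔ s.Pairwise (r < dist · ·) := by
  simp only [IsSeparated, edist_dist, ENNReal.ofReal_lt_ofReal_iff_of_nonneg hr]

theorem Metric.exists_maximal_isSeparated {X : Type*} [PseudoEMetricSpace X] (ε : ENNReal)
    (s : Set X) : ∃ N, Maximal (fun N ↦ N ⊆ s ∧ IsSeparated ε N) N := by
  refine zorn_subset _ fun c hcs hc ↦ ⟨⋃₀ c, ⟨Set.sUnion_subset fun N hN ↦ (hcs hN).1, ?_⟩,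
    fun N hN ↦ Set.subset_sUnion_of_mem hN⟩
  rintro a ⟨A, hA, ha⟩ b ⟨B, hB, hb⟩ hab
  rcases hc.total hA hB with h | h
  · exact (hcs hB).2 (h ha) hb hab
  · exact (hcs hA).2 ha (h hb) hab

section Packing

variable {E : Type*} [NormedAddCommGroup E] [NormedSpace ℝ E] [FiniteDimensional ℝ E]
  {c : E} {R r : ℝ}

theorem Finset.card_mul_pow_le_of_isSeparated {F : Finset E} (hR : 0 ≤ R) (hr : 0 < r)
    (hF : ↑F ⊆ closedBall c R) (hsep : IsSeparated (ENNReal.ofReal (2 * r)) (F : Set E)) :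
    F.card * r ^ finrank ℝ E ≤ (R + r) ^ finrank ℝ E := by
  borelize E
  set μ : Measure E := Measure.addHaar
  have hdisj : (F : Set E).PairwiseDisjoint (ball · r) := fun p hp q hq hpq ↦
    ball_disjoint_ball (by linarith [(isSeparated_ofReal_iff (by positivity)).1 hsep hp hq hpq])
  have hsub : ⋃ q ∈ F, ball q r ⊆ ball c (R + r) := by
    simp only [Set.iUnion_subset_iff]
    exact fun q hq ↦ ball_subset_ball' (by linarith [mem_closedBall.1 (hF hq)])
  have hvol : (F.card : ENNReal) * ENNReal.ofReal (r ^ finrank ℝ E) * μ (ball 0 1)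
      ≤ ENNReal.ofReal ((R + r) ^ finrank ℝ E) * μ (ball 0 1) :=
    calc (F.card : ENNReal) * ENNReal.ofReal (r ^ finrank ℝ E) * μ (ball 0 1)
        = μ (⋃ q ∈ F, ball q r) := by
          rw [measure_biUnion_finset hdisj fun q _ ↦ measurableSet_ball]
          simp [Measure.addHaar_ball_of_pos μ _ hr, mul_assoc]
      _ ≤ μ (ball c (R + r)) := measure_mono hsub
      _ = ENNReal.ofReal ((R + r) ^ finrank ℝ E) * μ (ball 0 1) :=
          Measure.addHaar_ball_of_pos μ _ (by positivity)
  rw [ENNReal.mul_le_mul_iff_left (measure_ball_pos μ 0 one_pos).ne' measure_ball_lt_top.ne,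
    ← ENNReal.ofReal_natCast, ← ENNReal.ofReal_mul (by positivity)] at hvol
  exact (ENNReal.ofReal_le_ofReal_iff (by positivity)).1 hvol

theorem Metric.IsSeparated.finite_of_subset_closedBall {A : Set E} (hR : 0 ≤ R) (hr : 0 < r)
    (hA : A ⊆ closedBall c R) (hsep : IsSeparated (ENNReal.ofReal (2 * r)) A) : A.Finite := by
  by_contra hinf
  obtain ⟨B, hBA, hBfin, hB⟩ := Set.Infinite.exists_subset_ncard_eq hinf
    (⌈(R + r) ^ finrank ℝ E / r ^ finrank ℝ E⌉₊ + 1)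
  have hcard := Finset.card_mul_pow_le_of_isSeparated (F := hBfin.toFinset) hR hr
    (by simpa using hBA.trans hA) (by simpa using hsep.subset hBA)
  rw [← Set.ncard_eq_toFinset_card B hBfin, hB, ← le_div_iff₀ (by positivity)] at hcard
  push_cast at hcard
  linarith [Nat.le_ceil ((R + r) ^ finrank ℝ E / r ^ finrank ℝ E)]

theorem Metric.IsSeparated.ncard_mul_pow_le {A : Set E} (hR : 0 ≤ R) (hr : 0 < r)
    (hA : A ⊆ closedBall c R) (hsep : IsSeparated (ENNReal.ofReal (2 * r)) A) :
    A.ncard * r ^ finrank ℝ E ≤ (R + r) ^ finrank ℝ E := by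
  rw [Set.ncard_eq_toFinset_card A (hsep.finite_of_subset_closedBall hR hr hA)]
  exact Finset.card_mul_pow_le_of_isSeparated hR hr (by simpa using hA) (by simpa using hsep)

end Packing

namespace AffineSubspace

open EuclideanGeometry

variable {H : Type*} [NormedAddCommGroup H] [InnerProductSpace ℝ H]

def tube (L : AffineSubspace ℝ H) (η : ℝ) : Set H :=
  {y | infDist y L ≤ η}

variable {L : AffineSubspace ℝ H} [Nonempty L]

section Projection

variable [L.direction.HasOrthogonalProjection]

theorem dist_sq_eq_norm_sub_sq_add_dist_orthogonalProjection_sq (a b : H) :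
    dist a b ^ 2 = ‖(a - orthogonalProjection L a) - (b - orthogonalProjection L b)‖ ^ 2
      + dist (orthogonalProjection L a : H) (orthogonalProjection L b) ^ 2 := by
  have hperp : (a - orthogonalProjection L a) - (b - orthogonalProjection L b) ∈ L.directionᗮ :=
    Submodule.sub_mem _ (vsub_orthogonalProjection_mem_direction_orthogonal L a)
      (vsub_orthogonalProjection_mem_direction_orthogonal L b)
  have hpar : (orthogonalProjection L a : H) - orthogonalProjection L b ∈ L.direction :=
    vsub_mem_direction (orthogonalProjection_mem a) (orthogonalProjection_mem b)
  have hsum : a - b = ((a - orthogonalProjection L a) - (b - orthogonalProjection L b))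
      + ((orthogonalProjection L a : H) - orthogonalProjection L b) := by abel
  rw [dist_eq_norm, dist_eq_norm, hsum, sq, sq, sq]
  exact norm_add_sq_eq_norm_sq_add_norm_sq_real
    (Submodule.inner_left_of_mem_orthogonal hpar hperp)

theorem dist_orthogonalProjection_le (a b : H) :
    dist (orthogonalProjection L a : H) (orthogonalProjection L b) ≤ dist a b := by
  refine (pow_le_pow_iff_left₀ dist_nonneg dist_nonneg two_ne_zero).1 ?_
  rw [dist_sq_eq_norm_sub_sq_add_dist_orthogonalProjection_sq (L := L) a b]
  exact le_add_of_nonneg_left (sq_nonneg _)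

theorem dist_sq_le_of_mem_tube {η : ℝ} {a b : H} (ha : a ∈ L.tube η) (hb : b ∈ L.tube η) :
    dist a b ^ 2 ≤ (2 * η) ^ 2
      + dist (orthogonalProjection L a : H) (orthogonalProjection L b) ^ 2 := by
  have hη : ∀ y ∈ L.tube η, ‖y - orthogonalProjection L y‖ ≤ η := fun y hy ↦ by
    rw [← dist_eq_norm, dist_orthogonalProjection_eq_infDist L y]; exact hy
  have hperp : ‖(a - orthogonalProjection L a) - (b - orthogonalProjection L b)‖ ≤ 2 * η :=
    (norm_sub_le _ _).trans (by linarith [hη a ha, hη b hb])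
  rw [dist_sq_eq_norm_sub_sq_add_dist_orthogonalProjection_sq (L := L)]
  gcongr

end Projection

variable [FiniteDimensional ℝ L.direction] {x : H} {t η : ℝ}

theorem _root_.Metric.IsSeparated.finite_and_ncard_mul_pow_le_of_subset_tube {C : Set H}
    (ht : 0 ≤ t) (hη : 0 < η) (hC : C ⊆ closedBall x t ∩ L.tube η)
    (hsep : IsSeparated (ENNReal.ofReal (2 * √2 * η)) C) :
    C.Finite ∧ C.ncard * η ^ finrank ℝ L.direction ≤ (t + η) ^ finrank ℝ L.direction := by
  set f : H → L.direction := fun y ↦ orthogonalProjection L y -ᵥ orthogonalProjection L x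
  have hball : f '' C ⊆ closedBall 0 t := by
    rintro _ ⟨y, hy, rfl⟩
    rw [mem_closedBall_zero_iff, ← dist_eq_norm_vsub]
    exact (dist_orthogonalProjection_le y x).trans (hC hy).1
  have hfar : ∀ a ∈ C, ∀ b ∈ C, a ≠ b → 2 * η < dist (f a) (f b) := by
    intro a ha b hb hab
    have hab' : 2 * √2 * η < dist a b :=
      (isSeparated_ofReal_iff (by positivity)).1 hsep ha hb hab
    have hsq : (2 * √2 * η) ^ 2 < dist a b ^ 2 := pow_lt_pow_left₀ hab' (by positivity) two_ne_zero
    have h8 : (2 * √2 * η) ^ 2 = 2 * (2 * η) ^ 2 := by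
      rw [mul_pow, mul_pow, Real.sq_sqrt zero_le_two]; ring
    rw [dist_vsub_cancel_right, Subtype.dist_eq]
    exact lt_of_pow_lt_pow_left₀ 2 dist_nonneg
      (by linarith [dist_sq_le_of_mem_tube (hC ha).2 (hC hb).2])
  have hinj : Set.InjOn f C := fun a ha b hb hfab ↦ by
    by_contra hab
    linarith [hfar a ha b hb hab, dist_le_zero.2 hfab]
  have hsep' : IsSeparated (ENNReal.ofReal (2 * η)) (f '' C) := by
    rw [isSeparated_ofReal_iff (by positivity)]
    rintro _ ⟨a, ha, rfl⟩ _ ⟨b, hb, rfl⟩ hne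
    exact hfar a ha b hb (ne_of_apply_ne f hne)
  refine ⟨(hsep'.finite_of_subset_closedBall ht hη hball).of_finite_image hinj, ?_⟩
  rw [← hinj.ncard_image]
  exact hsep'.ncard_mul_pow_le ht hη hball

theorem exists_finite_cover_of_subset_tube {S : Set H} (ht : 0 ≤ t) (hη : 0 < η)
    (hS : S ⊆ closedBall x t ∩ L.tube η) :
    ∃ N ⊆ S, N.Finite ∧ N.ncard * η ^ finrank ℝ L.direction ≤ (t + η) ^ finrank ℝ L.direction ∧
      S ⊆ ⋃ y ∈ N, closedBall y (2 * √2 * η) := by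
  obtain ⟨N, hN⟩ := exists_maximal_isSeparated (ENNReal.ofReal (2 * √2 * η)) S
  have hcover : IsCover (2 * √2 * η).toNNReal S N := IsCover.of_maximal_isSeparated hN
  rw [isCover_iff_subset_iUnion_closedBall, Real.coe_toNNReal _ (by positivity)] at hcover
  obtain ⟨hfin, hcard⟩ := hN.1.2.finite_and_ncard_mul_pow_le_of_subset_tube ht hη (hN.1.1.trans hS)
  exact ⟨N, hN.1.1, hfin, hcard, hcover⟩

end AffineSubspace

theorem msupport_compl_null {X : Type*} [MetricSpace X] [MeasurableSpace X]
    [SecondCountableTopology X] (μ : Measure X) : μ (msupport μ)ᶜ = 0 := by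
  refine measure_null_of_locally_null _ fun z hz ↦ ?_
  obtain ⟨r, hr, hzr⟩ : ∃ r, 0 < r ∧ μ (closedBall z r) = 0 := by simpa [msupport] using hz
  exact ⟨closedBall z r, mem_nhdsWithin_of_mem_nhds (closedBall_mem_nhds z hr), hzr⟩

theorem IsDRegular.const_pos {X : Type*} [MetricSpace X] [MeasurableSpace X] {d : ℕ} {C : ℝ}
    {μ : Measure X} (hreg : IsDRegular d C μ) : 0 < C :=
  zero_lt_one.trans_le hreg.1

theorem half_lt_measure_sdiff {X : Type*} [MeasurableSpace X] {μ : Measure X} {s t : Set X}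
    (hs : μ s ≠ ⊤) (h : μ (s ∩ t) < μ s / 2) : μ s / 2 < μ (s \ t) := by
  by_contra! h'
  have hdiff : μ (s \ t) ≠ ⊤ := (h'.trans_lt (ENNReal.div_lt_top hs two_ne_zero)).ne
  have : μ s < μ s := calc
    μ s ≤ μ (s ∩ t) + μ (s \ t) := measure_le_inter_add_sdiff μ s t
    _ < μ s / 2 + μ s / 2 := ENNReal.add_lt_add_of_lt_of_le hdiff h h'
    _ = μ s := ENNReal.add_halves _
  exact this.false

noncomputable def escapeConst (d m : ℕ) (C : ℝ) : ℝ :=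
  ((2 : ℝ) ^ (-(3 * (d : ℝ) / 2 + (m : ℝ) + 1)) * C ^ (-2 : ℝ)) ^ (1 / ((d : ℝ) - m))

section EscapeConst

variable {d m : ℕ} {C : ℝ}

theorem escapeConst_pos (hC : 0 < C) : 0 < escapeConst d m C := by
  unfold escapeConst; positivity

theorem two_mul_sqrt_two_pow_mul_escapeConst_pow (hmd : m < d) (hC : 0 < C) :
    (2 * √2) ^ d * escapeConst d m C ^ (d - m) = ((2 : ℝ) ^ (m + 1) * C ^ 2)⁻¹ := by
  have hdm : ((d - m : ℕ) : ℝ) = d - m := Nat.cast_sub hmd.le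
  have hεpow : escapeConst d m C ^ (d - m) =
      (2 : ℝ) ^ (-(3 * (d : ℝ) / 2 + (m : ℝ) + 1)) * C ^ (-2 : ℝ) := by
    rw [escapeConst, ← Real.rpow_natCast, ← Real.rpow_mul (by positivity), hdm,
      one_div_mul_cancel (sub_ne_zero.2 (by exact_mod_cast hmd.ne')), Real.rpow_one]
  have hsqrt : (2 * √2 : ℝ) ^ d = (2 : ℝ) ^ (3 * (d : ℝ) / 2) := by
    rw [Real.sqrt_eq_rpow, ← Real.rpow_one_add' (by norm_num) (by norm_num),
      ← Real.rpow_natCast, ← Real.rpow_mul (by norm_num)]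
    ring_nf
  have hexp : 3 * (d : ℝ) / 2 + -(3 * (d : ℝ) / 2 + m + 1) = -((m + 1 : ℕ) : ℝ) := by
    push_cast; ring
  rw [hεpow, hsqrt, ← mul_assoc, ← Real.rpow_add two_pos, hexp, Real.rpow_neg zero_le_two,
    Real.rpow_neg hC.le, Real.rpow_natCast, Real.rpow_two, mul_inv]

theorem two_mul_sqrt_two_mul_escapeConst_le_one (hmd : m < d) (hC : 1 ≤ C) :
    2 * √2 * escapeConst d m C ≤ 1 := by
  have hε := (escapeConst_pos (d := d) (m := m) (zero_lt_one.trans_le hC)).le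
  have h1 : (1 : ℝ) ≤ 2 * √2 := by nlinarith [Real.one_lt_sqrt_two]
  refine (pow_le_one_iff_of_nonneg (by positivity) (Nat.sub_ne_zero_of_lt hmd)).1 ?_
  calc (2 * √2 * escapeConst d m C) ^ (d - m)
      = (2 * √2) ^ (d - m) * escapeConst d m C ^ (d - m) := mul_pow _ _ _
    _ ≤ (2 * √2) ^ d * escapeConst d m C ^ (d - m) := by gcongr; exact Nat.sub_le d m
    _ = ((2 : ℝ) ^ (m + 1) * C ^ 2)⁻¹ :=
        two_mul_sqrt_two_pow_mul_escapeConst_pow hmd (by linarith)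
    _ ≤ 1 := inv_le_one_of_one_le₀ (one_le_mul_of_one_le_of_one_le
        (one_le_pow₀ one_le_two) (one_le_pow₀ hC))

/-- The number of covering balls times the upper-regular mass of each is below half the
lower-regular mass of `B(x,t)`: this is the inequality that dictates `escapeConst`. -/
theorem escapeConst_covering_bound_lt_half (hm : 1 ≤ m) (hmd : m < d) (hC : 1 ≤ C) {t : ℝ}
    (ht : 0 < t) :
    (t + escapeConst d m C * t) ^ m / (escapeConst d m C * t) ^ m
      * (C * (2 * √2 * (escapeConst d m C * t)) ^ d) < C⁻¹ * t ^ d / 2 := by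
  set ε := escapeConst d m C
  have hC0 : 0 < C := zero_lt_one.trans_le hC
  have hε : 0 < ε := escapeConst_pos hC0
  have hε1 : ε < 1 := by
    nlinarith [two_mul_sqrt_two_mul_escapeConst_le_one (m := m) hmd hC, Real.one_lt_sqrt_two]
  have hsplit : (t + ε * t) ^ m / (ε * t) ^ m * (C * (2 * √2 * (ε * t)) ^ d)
      = (1 + ε) ^ m * ((2 * √2) ^ d * ε ^ (d - m)) * C * t ^ d := by
    have hd : ε ^ d = ε ^ m * ε ^ (d - m) := by rw [← pow_add, Nat.add_sub_cancel' hmd.le]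
    rw [show t + ε * t = (1 + ε) * t by ring, mul_pow (1 + ε), mul_pow ε, mul_pow _ (ε * t),
      mul_pow ε, hd]
    field_simp
  rw [hsplit, two_mul_sqrt_two_pow_mul_escapeConst_pow hmd hC0]
  calc (1 + ε) ^ m * ((2 : ℝ) ^ (m + 1) * C ^ 2)⁻¹ * C * t ^ d
      < 2 ^ m * ((2 : ℝ) ^ (m + 1) * C ^ 2)⁻¹ * C * t ^ d := by gcongr; linarith
    _ = C⁻¹ * t ^ d / 2 := by field_simp; ring

end EscapeConst

section Regular

open AffineSubspace

variable {H : Type*} [NormedAddCommGroup H] [InnerProductSpace ℝ H] [SecondCountableTopology H]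
  [MeasurableSpace H] {d : ℕ} {C : ℝ} {μ : Measure H} {L : AffineSubspace ℝ H} [Nonempty L]
  [FiniteDimensional ℝ L.direction] {x : H} {t η : ℝ}

theorem IsDRegular.measure_closedBall_inter_tube_le (hreg : IsDRegular d C μ) (ht : 0 < t)
    (htd : ENNReal.ofReal t ≤ ediam (msupport μ)) (hη : 0 < η) (hηt : 2 * √2 * η ≤ t) :
    μ (closedBall x t ∩ L.tube η) ≤ ENNReal.ofReal ((t + η) ^ finrank ℝ L.direction
      / η ^ finrank ℝ L.direction * (C * (2 * √2 * η) ^ d)) := by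
  obtain ⟨N, hNS, hNfin, hNcard, hcover⟩ :=
    exists_finite_cover_of_subset_tube (L := L) ht.le hη (Set.inter_subset_left (t := msupport μ))
  have hball : ∀ y ∈ N, μ (closedBall y (2 * √2 * η)) ≤ ENNReal.ofReal (C * (2 * √2 * η) ^ d) :=
    fun y hy ↦ (hreg.2 y (hNS hy).2 _ (by positivity)
      ((ENNReal.ofReal_le_ofReal hηt).trans htd)).2
  have hNcard' : (N.ncard : ℝ) ≤ (t + η) ^ finrank ℝ L.direction / η ^ finrank ℝ L.direction :=
    (le_div_iff₀ (by positivity)).2 hNcard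
  have hC := hreg.const_pos
  calc μ (closedBall x t ∩ L.tube η)
      = μ (closedBall x t ∩ L.tube η ∩ msupport μ) :=
        (measure_inter_conull (msupport_compl_null μ)).symm
    _ ≤ μ (⋃ y ∈ hNfin.toFinset, closedBall y (2 * √2 * η)) := by
        simpa using measure_mono hcover
    _ ≤ ∑ y ∈ hNfin.toFinset, μ (closedBall y (2 * √2 * η)) := measure_biUnion_finset_le _ _
    _ ≤ hNfin.toFinset.card • ENNReal.ofReal (C * (2 * √2 * η) ^ d) :=
        Finset.sum_le_card_nsmul _ _ _ fun y hy ↦ hball y (hNfin.mem_toFinset.1 hy)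
    _ ≤ _ := by
        rw [nsmul_eq_mul, ← Set.ncard_eq_toFinset_card N hNfin, ← ENNReal.ofReal_natCast,
          ← ENNReal.ofReal_mul (by positivity)]
        exact ENNReal.ofReal_le_ofReal (by gcongr)

theorem IsDRegular.measure_closedBall_inter_tube_lt_half {m : ℕ} (hreg : IsDRegular d C μ)
    (hm : 1 ≤ m) (hmd : m < d) (hL : finrank ℝ L.direction = m) (hx : x ∈ msupport μ)
    (ht : 0 < t) (htd : ENNReal.ofReal t ≤ ediam (msupport μ)) :
    μ (closedBall x t ∩ L.tube (escapeConst d m C * t)) < μ (closedBall x t) / 2 := by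
  have hC := hreg.const_pos
  have hε := escapeConst_pos (d := d) (m := m) hC
  have hεt : 2 * √2 * (escapeConst d m C * t) ≤ t := by
    rw [← mul_assoc]
    exact mul_le_of_le_one_left ht.le (two_mul_sqrt_two_mul_escapeConst_le_one hmd hreg.1)
  calc μ (closedBall x t ∩ L.tube (escapeConst d m C * t))
      ≤ _ := hreg.measure_closedBall_inter_tube_le ht htd (by positivity) hεt
    _ < ENNReal.ofReal (C⁻¹ * t ^ d / 2) := by
        rw [hL, ENNReal.ofReal_lt_ofReal_iff (by positivity)]
        exact escapeConst_covering_bound_lt_half hm hmd hreg.1 ht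
    _ = ENNReal.ofReal (C⁻¹ * t ^ d) / 2 := by
        rw [ENNReal.ofReal_div_of_pos two_pos, ENNReal.ofReal_ofNat]
    _ ≤ μ (closedBall x t) / 2 := by
        gcongr
        exact (hreg.2 x hx t ht htd).1

end Regular

theorem escape_from_tube_general {H : Type*} [NormedAddCommGroup H] [InnerProductSpace ℝ H]
    [SecondCountableTopology H] [MeasurableSpace H]
    (d : ℕ) (Cμ : ℝ) (μ : Measure H) (hreg : IsDRegular d Cμ μ)
    (m : ℕ) (hm1 : 1 ≤ m) (hmd : m < d)
    (x : H) (hx : x ∈ msupport μ) (t : ℝ) (ht : 0 < t)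
    (htd : ENNReal.ofReal t ≤ EMetric.diam (msupport μ))
    (L : AffineSubspace ℝ H) (hxL : x ∈ L) (hL : Module.finrank ℝ L.direction = m) :
    0 < ((2 : ℝ) ^ (-(3 * (d : ℝ) / 2 + (m : ℝ) + 1)) * Cμ ^ (-2 : ℝ)) ^ (1 / ((d : ℝ) - m)) ∧
    ((closedBall x t ∩ msupport μ) \
        {y | Metric.infDist y (L : Set H) ≤
          ((2 : ℝ) ^ (-(3 * (d : ℝ) / 2 + (m : ℝ) + 1)) * Cμ ^ (-2 : ℝ)) ^ (1 / ((d : ℝ) - m))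
            * t}).Nonempty ∧
    μ (closedBall x t) / 2 <
      μ (closedBall x t \
        {y | Metric.infDist y (L : Set H) ≤
          ((2 : ℝ) ^ (-(3 * (d : ℝ) / 2 + (m : ℝ) + 1)) * Cμ ^ (-2 : ℝ)) ^ (1 / ((d : ℝ) - m))
            * t}) := by
  have : FiniteDimensional ℝ L.direction := Module.finite_of_finrank_pos (hL ▸ hm1)
  have : Nonempty L := ⟨⟨x, hxL⟩⟩
  have hfin : μ (closedBall x t) ≠ ⊤ :=
    ((hreg.2 x hx t ht htd).2.trans_lt ENNReal.ofReal_lt_top).ne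
  have hhalf : μ (closedBall x t) / 2 < μ (closedBall x t \ L.tube (escapeConst d m Cμ * t)) :=
    half_lt_measure_sdiff hfin (hreg.measure_closedBall_inter_tube_lt_half hm1 hmd hL hx ht htd)
  refine ⟨escapeConst_pos hreg.const_pos, nonempty_of_measure_ne_zero (μ := μ) ?_, hhalf⟩
  rw [Set.inter_sdiff_right_comm, measure_inter_conull (msupport_compl_null μ)]
  exact (pos_of_gt hhalf).ne'

/-- Escaping tubes: with ε = (2^{−(3d/2+m+1)}·Cμ^{−2})^{1/(d−m)} > 0, for any x ∈ supp μ,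
0 < t ≤ diam supp μ, and any m-plane L through x with 1 ≤ m < d, the set
(B(x,t) ∩ supp μ) \ Tube(L, ε t) is nonempty; in particular
μ(B(x,t) \ Tube(L, ε t)) > μ(B(x,t))/2. -/
theorem escape_from_tube {H : Type*} [NormedAddCommGroup H] [InnerProductSpace ℝ H]
    [CompleteSpace H] [SecondCountableTopology H] [MeasurableSpace H] [BorelSpace H]
    (d : ℕ) (hdim : (d : Cardinal) < Module.rank ℝ H)
    (Cμ : ℝ) (μ : Measure H) (hreg : IsDRegular d Cμ μ)
    (m : ℕ) (hm1 : 1 ≤ m) (hmd : m < d)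
    (x : H) (hx : x ∈ msupport μ) (t : ℝ) (ht : 0 < t)
    (htd : ENNReal.ofReal t ≤ EMetric.diam (msupport μ))
    (L : AffineSubspace ℝ H) (hxL : x ∈ L) (hL : Module.finrank ℝ L.direction = m) :
    0 < ((2 : ℝ) ^ (-(3 * (d : ℝ) / 2 + (m : ℝ) + 1)) * Cμ ^ (-2 : ℝ)) ^ (1 / ((d : ℝ) - m)) ∧
    ((closedBall x t ∩ msupport μ) \
        {y | Metric.infDist y (L : Set H) ≤
          ((2 : ℝ) ^ (-(3 * (d : ℝ) / 2 + (m : ℝ) + 1)) * Cμ ^ (-2 : ℝ)) ^ (1 / ((d : ℝ) - m))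
            * t}).Nonempty ∧
    μ (closedBall x t) / 2 <
      μ (closedBall x t \
        {y | Metric.infDist y (L : Set H) ≤
          ((2 : ℝ) ^ (-(3 * (d : ℝ) / 2 + (m : ℝ) + 1)) * Cμ ^ (-2 : ℝ)) ^ (1 / ((d : ℝ) - m))
            * t}) :=
  escape_from_tube_general d Cμ μ hreg m hm1 hmd x hx t ht htd L hxL hL
end

section
/- Let P and P̃ be the orthogonal projections of a Hilbert space H onto two d-planes L and L̃, and suppose L ≠ L̃ but L ∩ L̃ contains a (d−1)-plane L'. Let P' be the orthogonal projection onto L', and let α be the dihedral angle between L and L̃ along L'. Then for every y ∈ H, dist(P̃(y), P(P̃(y))) = sin(α) · dist(P̃(y), P'(P̃(y))). -/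
/-!
By dimension count, `L.direction = L'.direction ⊕ ℝ u` and `Lt.direction = L'.direction ⊕ ℝ v`
orthogonally, so projecting onto `L` is projecting onto `L'` and adding the component along `u`,
and likewise for `Lt` and `v`. A point `x ∈ Lt` is its own projection onto `Lt`, which gives
`x - P' x = t v`; hence `x - P x = t (v - ⟪u, v⟫ u)`, whose norm is `|t| sin α = sin α · ‖x - P' x‖`.
-/

open EuclideanGeometry

theorem Submodule.sup_span_singleton_eq_of_finrank_eq_succ {K V : Type*} [DivisionRing K]
    [AddCommGroup V] [Module K V] {S T : Submodule K V} {v : V} (hST : S ≤ T) (hvT : v ∈ T)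
    (hvS : v ∉ S) (hfin : Module.finrank K T = Module.finrank K S + 1) :
    S ⊔ K ∙ v = T := by
  have : FiniteDimensional K T := Module.finite_of_finrank_eq_succ hfin
  have : FiniteDimensional K S := Submodule.finiteDimensional_of_le hST
  have hv0 : v ≠ 0 := fun h => hvS (h ▸ S.zero_mem)
  have hdim := Submodule.finrank_sup_add_finrank_inf_eq S (K ∙ v)
  rw [disjoint_iff.mp (Submodule.disjoint_span_singleton_of_notMem hvS), finrank_bot,
    finrank_span_singleton hv0] at hdim
  exact Submodule.eq_of_le_of_finrank_eq
    (sup_le hST ((Submodule.span_singleton_le_iff_mem v T).mpr hvT)) (by omega)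

theorem Submodule.sup_span_singleton_eq_of_mem_orthogonal {𝕜 E : Type*} [RCLike 𝕜]
    [NormedAddCommGroup E] [InnerProductSpace 𝕜 E] {S T : Submodule 𝕜 E} {v : E} (hST : S ≤ T)
    (hvT : v ∈ T) (hv : v ∈ Sᗮ) (hv0 : v ≠ 0)
    (hfin : Module.finrank 𝕜 T = Module.finrank 𝕜 S + 1) : S ⊔ 𝕜 ∙ v = T :=
  sup_span_singleton_eq_of_finrank_eq_succ hST hvT
    (fun hvS => hv0 (inner_self_eq_zero.mp (S.inner_right_of_mem_orthogonal hvS hv))) hfin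

theorem EuclideanGeometry.coe_orthogonalProjection_eq_of_mem {𝕜 V P : Type*} [RCLike 𝕜]
    [NormedAddCommGroup V] [InnerProductSpace 𝕜 V] [MetricSpace P] [NormedAddTorsor V P]
    {s : AffineSubspace 𝕜 P} [Nonempty s] [s.direction.HasOrthogonalProjection] {p q : P}
    (hq : q ∈ s) (hpq : p -ᵥ q ∈ s.directionᗮ) : (orthogonalProjection s p : P) = q := by
  have hq' : q ∈ (s : Set P) ∩ AffineSubspace.mk' p s.directionᗮ :=
    ⟨hq, AffineSubspace.mem_mk'.mpr (by rw [← neg_vsub_eq_vsub_rev]; exact neg_mem hpq)⟩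
  rw [inter_eq_singleton_orthogonalProjection] at hq'
  exact hq'.symm

section

variable {H : Type*} [NormedAddCommGroup H] [InnerProductSpace ℝ H]

theorem InnerProductGeometry.norm_sub_inner_smul_eq_mul_sin_angle {u : H} (hu : ‖u‖ = 1)
    (v : H) : ‖v - inner ℝ u v • u‖ = ‖v‖ * Real.sin (InnerProductGeometry.angle u v) := by
  have hsin := InnerProductGeometry.sin_angle_mul_norm_mul_norm u v
  rw [hu, one_mul, real_inner_self_eq_norm_sq u, hu, one_pow, one_mul] at hsin
  rw [mul_comm, hsin, norm_eq_sqrt_real_inner]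
  congr 1
  simp only [inner_sub_left, inner_sub_right, real_inner_smul_left, real_inner_smul_right,
    real_inner_comm u v, real_inner_self_eq_norm_sq u, hu]
  ring

theorem EuclideanGeometry.coe_orthogonalProjection_eq_add_inner_smul {s s' : AffineSubspace ℝ H}
    [Nonempty s] [Nonempty s'] [s.direction.HasOrthogonalProjection]
    [s'.direction.HasOrthogonalProjection] (hs' : s' ≤ s) {u : H} (hu : ‖u‖ = 1)
    (hu' : u ∈ s'.directionᗮ) (hs : s'.direction ⊔ ℝ ∙ u = s.direction) (p : H) :
    (orthogonalProjection s p : H) =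
      (orthogonalProjection s' p : H) + inner ℝ u (p - orthogonalProjection s' p) • u := by
  set p' : H := (orthogonalProjection s' p : H)
  set c : ℝ := inner ℝ u (p - p')
  have hcu : c • u ∈ s.direction :=
    hs ▸ Submodule.smul_mem _ c (Submodule.mem_sup_right (Submodule.mem_span_singleton_self u))
  refine coe_orthogonalProjection_eq_of_mem ?_ ?_
  · simpa [add_comm] using
      AffineSubspace.vadd_mem_of_mem_direction hcu (hs' (orthogonalProjection_mem p))
  · rw [← hs, ← Submodule.inf_orthogonal, vsub_eq_sub, ← sub_sub]
    refine ⟨Submodule.sub_mem _ ?_ (Submodule.smul_mem _ c hu'), ?_⟩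
    · simpa using vsub_orthogonalProjection_mem_direction_orthogonal s' p
    · rw [SetLike.mem_coe, Submodule.mem_orthogonal_singleton_iff_inner_right, inner_sub_right,
        real_inner_smul_right, real_inner_self_eq_norm_sq, hu]
      ring

end

theorem dihedral_angle_projection_formula_general {H : Type*} [NormedAddCommGroup H]
    [InnerProductSpace ℝ H]
    (d : ℕ) (hd : 1 ≤ d) (L Lt L' : AffineSubspace ℝ H)
    [Nonempty L] [Nonempty Lt] [Nonempty L']
    [L.direction.HasOrthogonalProjection] [Lt.direction.HasOrthogonalProjection]
    [L'.direction.HasOrthogonalProjection]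
    (hLd : Module.finrank ℝ L.direction = d) (hLtd : Module.finrank ℝ Lt.direction = d)
    (hsub : (L' : Set H) ⊆ (L : Set H) ∩ (Lt : Set H))
    (hL'd : Module.finrank ℝ L'.direction = d - 1)
    (u v : H) (hu : u ∈ L.direction) (hv : v ∈ Lt.direction)
    (hu1 : ‖u‖ = 1) (hv1 : ‖v‖ = 1)
    (huperp : ∀ w ∈ L'.direction, (inner ℝ u w : ℝ) = 0)
    (hvperp : ∀ w ∈ L'.direction, (inner ℝ v w : ℝ) = 0) :
    ∀ y : H,
      dist ((orthogonalProjection Lt y : H))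
          ((orthogonalProjection L ((orthogonalProjection Lt y : H)) : H)) =
        Real.sin (InnerProductGeometry.angle u v) *
          dist ((orthogonalProjection Lt y : H))
            ((orthogonalProjection L' ((orthogonalProjection Lt y : H)) : H)) := by
  have hu' : u ∈ L'.directionᗮ := (Submodule.mem_orthogonal' _ _).mpr huperp
  have hv' : v ∈ L'.directionᗮ := (Submodule.mem_orthogonal' _ _).mpr hvperp
  have hL'L : L' ≤ L := fun _ hz => (hsub hz).1
  have hL'Lt : L' ≤ Lt := fun _ hz => (hsub hz).2
  have hdirL : L'.direction ⊔ ℝ ∙ u = L.direction :=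
    Submodule.sup_span_singleton_eq_of_mem_orthogonal (AffineSubspace.direction_le hL'L) hu hu'
      (ne_zero_of_norm_ne_zero (by simp [hu1])) (by omega)
  have hdirLt : L'.direction ⊔ ℝ ∙ v = Lt.direction :=
    Submodule.sup_span_singleton_eq_of_mem_orthogonal (AffineSubspace.direction_le hL'Lt) hv hv'
      (ne_zero_of_norm_ne_zero (by simp [hv1])) (by omega)
  intro y
  set x : H := (orthogonalProjection Lt y : H)
  set p' : H := (orthogonalProjection L' x : H)
  set t : ℝ := inner ℝ v (x - p')
  have hx : x - p' = t • v := by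
    have := coe_orthogonalProjection_eq_add_inner_smul hL'Lt hv1 hv' hdirLt x
    rw [orthogonalProjection_eq_self_iff.mpr (orthogonalProjection_mem y)] at this
    rw [sub_eq_iff_eq_add', ← this]
  have hPx : x - orthogonalProjection L x = t • (v - inner ℝ u v • u) := by
    rw [coe_orthogonalProjection_eq_add_inner_smul hL'L hu1 hu' hdirL x,
      ← sub_sub, hx, inner_smul_right, smul_sub, smul_smul]
  rw [dist_eq_norm, dist_eq_norm, hPx, hx, norm_smul, norm_smul, hv1,
    InnerProductGeometry.norm_sub_inner_smul_eq_mul_sin_angle hu1, hv1]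
  ring

/-- Dihedral angle formula: if L and L̃ are distinct d-planes meeting in a (d−1)-plane L',
u and v are unit vectors in the directions of L and L̃ orthogonal to L' on the same side
(⟪u,v⟫ ≥ 0), and α is the angle between u and v, then for every y ∈ H,
dist(P̃(y), P(P̃(y))) = sin(α) · dist(P̃(y), P'(P̃(y))), where P, P̃, P' are the orthogonal
projections onto L, L̃, L'. -/
theorem dihedral_angle_projection_formula {H : Type*} [NormedAddCommGroup H]
    [InnerProductSpace ℝ H] [CompleteSpace H]
    (d : ℕ) (hd : 1 ≤ d) (L Lt L' : AffineSubspace ℝ H)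
    [Nonempty L] [Nonempty Lt] [Nonempty L']
    [L.direction.HasOrthogonalProjection] [Lt.direction.HasOrthogonalProjection]
    [L'.direction.HasOrthogonalProjection]
    (hLd : Module.finrank ℝ L.direction = d) (hLtd : Module.finrank ℝ Lt.direction = d)
    (hne : L ≠ Lt) (hsub : (L' : Set H) ⊆ (L : Set H) ∩ (Lt : Set H))
    (hL'd : Module.finrank ℝ L'.direction = d - 1)
    (u v : H) (hu : u ∈ L.direction) (hv : v ∈ Lt.direction)
    (hu1 : ‖u‖ = 1) (hv1 : ‖v‖ = 1)
    (huperp : ∀ w ∈ L'.direction, (inner ℝ u w : ℝ) = 0)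
    (hvperp : ∀ w ∈ L'.direction, (inner ℝ v w : ℝ) = 0)
    (hside : 0 ≤ (inner ℝ u v : ℝ)) :
    ∀ y : H,
      dist ((orthogonalProjection Lt y : H))
          ((orthogonalProjection L ((orthogonalProjection Lt y : H)) : H)) =
        Real.sin (InnerProductGeometry.angle u v) *
          dist ((orthogonalProjection Lt y : H))
            ((orthogonalProjection L' ((orthogonalProjection Lt y : H)) : H)) :=
  dihedral_angle_projection_formula_general d hd L Lt L' hLd hLtd hsub hL'd u v hu hv hu1 hv1 huperp
    hvperp
end

section
/- Let x₀,…,x_n ∈ H span a non-degenerate n-simplex with M_n(x₀,…,x_n) ≥ ω·tⁿ, diam{x₀,…,x_n} ≤ 3t, and suppose a point w = x₀ + Σ_{i=1}^n s_i·(x_i − x₀) lies in the affine span L of x₀,…,x_n with ‖w − x₀‖ ≤ 2t. Then max_{1≤i≤n} |s_i| ≤ 2·3^{n−1}/ω. -/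
/-!
With `v j = x (j+1) - x 0`, replacing `v i` by `w = ∑ s j • v j` multiplies the Gram determinant
by `s i ^ 2`. Hadamard's inequality bounds the new determinant by `‖w‖² ∏_{j ≠ i} ‖v j‖²
≤ (2t)² (3t)^{2(n-1)}`, while the old one is at least `(ω tⁿ)²` by assumption.
-/

open Metric Finset

noncomputable section

namespace Matrix

variable {ι κ E : Type*}

theorem PosSemidef.det_le_one_of_diag_eq_one [Fintype ι] [DecidableEq ι] {A : Matrix ι ι ℝ}
    (hA : A.PosSemidef) (hdiag : ∀ i, A i i = 1) : A.det ≤ 1 := by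
  -- `λ ≤ exp (λ - 1)` for each eigenvalue, and the eigenvalues sum to `trace A = card ι`.
  have htrace : ∑ i, (hA.1.eigenvalues i - 1) = 0 := by
    have := hA.1.trace_eq_sum_eigenvalues
    simp only [trace, diag, hdiag, sum_const, card_univ, nsmul_eq_mul, mul_one,
      RCLike.ofReal_real_eq_id, id] at this
    rw [sum_sub_distrib, ← this]
    simp
  calc A.det = ∏ i, hA.1.eigenvalues i := by simpa using hA.1.det_eq_prod_eigenvalues
    _ ≤ ∏ i, Real.exp (hA.1.eigenvalues i - 1) :=
      prod_le_prod (fun i _ => hA.eigenvalues_nonneg i)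
        fun i _ => by linarith [Real.add_one_le_exp (hA.1.eigenvalues i - 1)]
    _ = 1 := by rw [← Real.exp_sum, htrace, Real.exp_zero]

variable [NormedAddCommGroup E] [InnerProductSpace ℝ E]

theorem gram_sum_smul [Fintype κ] (A : Matrix κ ι ℝ) (v : κ → E) :
    gram ℝ (fun j => ∑ l, A l j • v l) = Aᵀ * gram ℝ v * A := by
  ext i j
  simp only [gram_apply, mul_apply, transpose_apply, sum_inner, inner_sum,
    real_inner_smul_left, real_inner_smul_right, sum_mul]
  exact sum_congr rfl fun _ _ => sum_congr rfl fun _ _ => by ring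

theorem det_gram_smul [Fintype ι] [DecidableEq ι] (c : ι → ℝ) (v : ι → E) :
    (gram ℝ fun i => c i • v i).det = (∏ i, c i) ^ 2 * (gram ℝ v).det := by
  have : gram ℝ (fun i => c i • v i) = diagonal c * gram ℝ v * diagonal c := by
    ext i j
    simp only [gram_apply, diagonal_mul, mul_diagonal, real_inner_smul_left,
      real_inner_smul_right]
    ring
  rw [this, det_mul, det_mul, det_diagonal]
  ring

theorem det_gram_le_prod_norm_sq [Fintype ι] [DecidableEq ι] (v : ι → E) :
    (gram ℝ v).det ≤ ∏ i, ‖v i‖ ^ 2 := by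
  by_cases hzero : ∃ i, v i = 0
  · obtain ⟨i, hi⟩ := hzero
    rw [det_eq_zero_of_row_eq_zero i fun j => by simp [hi]]
    positivity
  push Not at hzero
  have hnorm : ∀ i, ‖v i‖ ≠ 0 := fun i => norm_ne_zero_iff.mpr (hzero i)
  set u : ι → E := fun i => ‖v i‖⁻¹ • v i
  have hu : (gram ℝ u).det ≤ 1 := (posSemidef_gram ℝ u).det_le_one_of_diag_eq_one fun i => by
    rw [gram_apply, real_inner_self_eq_norm_sq, norm_smul, norm_inv, norm_norm,
      inv_mul_cancel₀ (hnorm i), one_pow]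
  have hprod : 0 < ∏ i, ‖v i‖ := prod_pos fun i _ => norm_pos_iff.mpr (hzero i)
  rw [det_gram_smul, prod_inv_distrib, inv_pow, inv_mul_le_iff₀ (by positivity), mul_one] at hu
  rwa [prod_pow]

theorem det_gram_update_sum_smul [Fintype ι] [DecidableEq ι] (v : ι → E) (s : ι → ℝ) (i : ι) :
    (gram ℝ (Function.update v i (∑ l, s l • v l))).det = s i ^ 2 * (gram ℝ v).det := by
  set A : Matrix ι ι ℝ := (1 : Matrix ι ι ℝ).updateCol i s
  have hA : Function.update v i (∑ l, s l • v l) = fun j => ∑ l, A l j • v l := by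
    ext j
    rcases eq_or_ne j i with rfl | hj
    · simp [A]
    · simp [A, hj, one_apply]
  have hdetA : A.det = s i := by rw [← cramer_apply, cramer_one]; rfl
  rw [hA, gram_sum_smul, det_mul, det_mul, det_transpose, hdetA]
  ring

theorem abs_mul_sqrt_det_gram_le [Fintype ι] [DecidableEq ι] (v : ι → E) (s : ι → ℝ) (i : ι) :
    |s i| * √(gram ℝ v).det ≤ ‖∑ l, s l • v l‖ * ∏ j ∈ univ.erase i, ‖v j‖ := by
  have hsq : s i ^ 2 * (gram ℝ v).det ≤ (‖∑ l, s l • v l‖ * ∏ j ∈ univ.erase i, ‖v j‖) ^ 2 := by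
    rw [← det_gram_update_sum_smul]
    refine (det_gram_le_prod_norm_sq _).trans_eq ?_
    rw [← mul_prod_erase univ _ (mem_univ i), Function.update_self, mul_pow, ← prod_pow]
    congr 1
    exact prod_congr rfl fun j hj => by rw [Function.update_of_ne (ne_of_mem_erase hj)]
  calc |s i| * √(gram ℝ v).det = √(s i ^ 2 * (gram ℝ v).det) := by
        rw [Real.sqrt_mul (sq_nonneg _), Real.sqrt_sq_eq_abs]
    _ ≤ √((‖∑ l, s l • v l‖ * ∏ j ∈ univ.erase i, ‖v j‖) ^ 2) := Real.sqrt_le_sqrt hsq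
    _ = ‖∑ l, s l • v l‖ * ∏ j ∈ univ.erase i, ‖v j‖ := Real.sqrt_sq (by positivity)

end Matrix

theorem barycentric_coefficients_bound_general {H : Type*} [NormedAddCommGroup H]
    [InnerProductSpace ℝ H] (n : ℕ) (ω t : ℝ) (hω : 0 < ω) (ht : 0 < t)
    (x : Fin (n + 1) → H) (hcont : ω * t ^ n ≤ simplexContent n x)
    (hdiam : Metric.diam (Set.range x) ≤ 3 * t)
    (s : Fin n → ℝ) (hw : ‖∑ i, s i • (x i.succ - x 0)‖ ≤ 2 * t) :
    ∀ i, |s i| ≤ 2 * 3 ^ (n - 1) / ω := by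
  intro i
  set v : Fin n → H := fun j => x j.succ - x 0
  have hv : ∀ j, ‖v j‖ ≤ 3 * t := fun j => by
    rw [← dist_eq_norm]
    exact (dist_le_diam_of_mem (Set.finite_range x).isBounded (Set.mem_range_self _)
      (Set.mem_range_self _)).trans hdiam
  have hface : ∏ j ∈ univ.erase i, ‖v j‖ ≤ (3 * t) ^ (n - 1) := by
    simpa [card_erase_of_mem] using
      prod_le_prod (s := univ.erase i) (fun j _ => norm_nonneg (v j)) fun j _ => hv j
  have htn : t * t ^ (n - 1) = t ^ n := by rw [← pow_succ', Nat.sub_add_cancel i.pos]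
  have key : |s i| * ω * t ^ n ≤ 2 * 3 ^ (n - 1) * t ^ n :=
    calc |s i| * ω * t ^ n = |s i| * (ω * t ^ n) := mul_assoc _ _ _
      _ ≤ |s i| * simplexContent n x := by gcongr
      _ ≤ ‖∑ l, s l • v l‖ * ∏ j ∈ univ.erase i, ‖v j‖ := Matrix.abs_mul_sqrt_det_gram_le v s i
      _ ≤ 2 * t * (3 * t) ^ (n - 1) := by gcongr
      _ = 2 * 3 ^ (n - 1) * t ^ n := by rw [mul_pow, ← htn]; ring
  rw [le_div_iff₀ hω]
  exact le_of_mul_le_mul_right key (by positivity)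

/-- If M_n(x₀,…,x_n) ≥ ω·tⁿ, diam{x₀,…,x_n} ≤ 3t, and the point
w = x₀ + Σᵢ sᵢ·(xᵢ − x₀) satisfies ‖w − x₀‖ ≤ 2t, then max |sᵢ| ≤ 2·3^{n−1}/ω. -/
theorem barycentric_coefficients_bound {H : Type*} [NormedAddCommGroup H]
    [InnerProductSpace ℝ H] (n : ℕ) (hn : 1 ≤ n) (ω t : ℝ) (hω : 0 < ω) (ht : 0 < t)
    (x : Fin (n + 1) → H) (hcont : ω * t ^ n ≤ simplexContent n x)
    (hdiam : Metric.diam (Set.range x) ≤ 3 * t)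
    (s : Fin n → ℝ) (hw : ‖∑ i, s i • (x i.succ - x 0)‖ ≤ 2 * t) :
    ∀ i, |s i| ≤ 2 * 3 ^ (n - 1) / ω :=
  barycentric_coefficients_bound_general n ω t hω ht x hcont hdiam s hw
end
end

section
/- Let L be a d-plane in H, x̃₀,…,x̃_d points with x̃_i = x_i + z̃_i + ε̃_i where x_i ∈ L', z̃_i is parallel to the linear part of a fixed n-plane L' through the x_i's, ε̃_i ⊥ that linear part, and ‖x̃_i − x_i‖ ≤ δ·t for all i. Let P and P̃ be the orthogonal projections onto L' and onto the affine span L̃ of x̃₀,…,x̃_n respectively. Then for any y ∈ H whose barycentric coefficients s̃_i(y) (defined by P̃(y) = x̃₀ + Σ s̃_i(y)(x̃_i − x̃₀)) satisfy max_i |s̃_i(y)| ≤ S, one has ‖P(P̃(y)) − P̃(y)‖ ≤ (1 + 2nS)·δ·t. -/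
open EuclideanGeometry Finset

/-! The combination `a + ∑ sᵢ • (bᵢ - a)` is additive in the points, so `P̃ y` splits into the
combination of the `xᵢ + z̃ᵢ`, a point of `L'`, plus the combination of the `ε̃ᵢ`, a vector normal
to `L'`. The projection `P` keeps the former and removes the latter, so `P (P̃ y) - P̃ y` is minus
the `ε̃`-combination. By Pythagoras `‖ε̃ᵢ‖ ≤ ‖z̃ᵢ + ε̃ᵢ‖ ≤ δ t`, and the triangle inequality
gives the bound. -/

section Combination

variable {ι : Type*} [Fintype ι]

theorem add_sum_smul_sub_add_add {k V : Type*} [Ring k] [AddCommGroup V] [Module k V]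
    (a a' : V) (b b' : ι → V) (c : ι → k) :
    a + a' + ∑ i, c i • (b i + b' i - (a + a')) =
      (a + ∑ i, c i • (b i - a)) + (a' + ∑ i, c i • (b' i - a')) := by
  simp only [add_sub_add_comm, smul_add, sum_add_distrib]
  abel

theorem AffineSubspace.add_sum_smul_sub_mem {k V : Type*} [Ring k] [AddCommGroup V]
    [Module k V] {s : AffineSubspace k V} {a : V} {b : ι → V} (ha : a ∈ s) (hb : ∀ i, b i ∈ s)
    (c : ι → k) : a + ∑ i, c i • (b i - a) ∈ s := by
  rw [add_comm]
  exact AffineSubspace.vadd_mem_of_mem_direction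
    (Submodule.sum_mem _ fun i _ => Submodule.smul_mem _ _ (vsub_mem_direction (hb i) ha)) ha

theorem norm_add_sum_smul_sub_le {E : Type*} [SeminormedAddCommGroup E] [NormedSpace ℝ E]
    {a : E} {b : ι → E} {c : ι → ℝ} {r S : ℝ} (ha : ‖a‖ ≤ r) (hb : ∀ i, ‖b i‖ ≤ r)
    (hc : ∀ i, |c i| ≤ S) :
    ‖a + ∑ i, c i • (b i - a)‖ ≤ (1 + 2 * Fintype.card ι * S) * r := by
  have hr : 0 ≤ 2 * r := by linarith [norm_nonneg a]
  have hterm : ∀ i, ‖c i • (b i - a)‖ ≤ S * (2 * r) := fun i => by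
    rw [norm_smul, Real.norm_eq_abs]
    calc |c i| * ‖b i - a‖ ≤ |c i| * (2 * r) := by
          gcongr; linarith [norm_sub_le (b i) a, hb i]
      _ ≤ S * (2 * r) := mul_le_mul_of_nonneg_right (hc i) hr
  calc ‖a + ∑ i, c i • (b i - a)‖ ≤ r + ∑ _i : ι, S * (2 * r) :=
        (norm_add_le _ _).trans <|
          add_le_add ha ((norm_sum_le _ _).trans (sum_le_sum fun i _ => hterm i))
    _ = (1 + 2 * Fintype.card ι * S) * r := by
        rw [sum_const, card_univ, nsmul_eq_mul]; ring

end Combination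

theorem norm_le_norm_add_of_inner_eq_zero {F : Type*} [NormedAddCommGroup F]
    [InnerProductSpace ℝ F] {x y : F} (h : inner ℝ x y = 0) : ‖y‖ ≤ ‖x + y‖ := by
  have := norm_add_sq_eq_norm_sq_add_norm_sq_real h
  exact (pow_le_pow_iff_left₀ (norm_nonneg _) (norm_nonneg _) two_ne_zero).1 (by nlinarith)

theorem EuclideanGeometry.orthogonalProjection_add_sub_eq_neg {H : Type*}
    [NormedAddCommGroup H] [InnerProductSpace ℝ H] {s : AffineSubspace ℝ H} [Nonempty s]
    [s.direction.HasOrthogonalProjection] {p v : H} (hp : p ∈ s) (hv : v ∈ s.directionᗮ) :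
    (orthogonalProjection s (p + v) : H) - (p + v) = -v := by
  rw [add_comm p v, ← vadd_eq_add, orthogonalProjection_vadd_eq_self hp hv, vadd_eq_add]
  abel

theorem perturbed_projection_bound_general {H : Type*} [NormedAddCommGroup H]
    [InnerProductSpace ℝ H]
    (n : ℕ) (δ t S : ℝ)
    (L' : AffineSubspace ℝ H) [Nonempty L'] [Submodule.HasOrthogonalProjection L'.direction]
    (x xt z ε : Fin (n + 1) → H)
    (hx : ∀ i, x i ∈ L') (hz : ∀ i, z i ∈ L'.direction)
    (hε : ∀ i, ∀ w ∈ L'.direction, (inner ℝ (ε i) w : ℝ) = 0)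
    (hdecomp : ∀ i, xt i = x i + z i + ε i)
    (hclose : ∀ i, ‖xt i - x i‖ ≤ δ * t)
    (s : Fin n → ℝ) (hs : ∀ i, |s i| ≤ S) :
    ‖(orthogonalProjection L' (xt 0 + ∑ i, s i • (xt i.succ - xt 0)) : H) -
        (xt 0 + ∑ i, s i • (xt i.succ - xt 0))‖ ≤ (1 + 2 * n * S) * (δ * t) := by
  have hxz : ∀ i, x i + z i ∈ L' := fun i => by
    rw [add_comm]; exact AffineSubspace.vadd_mem_of_mem_direction (hz i) (hx i)
  have hε_perp : ∀ i, ε i ∈ L'.directionᗮ := fun i => (Submodule.mem_orthogonal' _ _).2 (hε i)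
  have hε_norm : ∀ i, ‖ε i‖ ≤ δ * t := fun i =>
    (norm_le_norm_add_of_inner_eq_zero (real_inner_comm (z i) (ε i) ▸ hε i (z i) (hz i))).trans
      (by simpa [hdecomp i, add_assoc] using hclose i)
  have hε_comb : ε 0 + ∑ i, s i • (ε i.succ - ε 0) ∈ L'.directionᗮ :=
    Submodule.mem_toAffineSubspace.1 <|
      AffineSubspace.add_sum_smul_sub_mem (b := fun i => ε i.succ)
        (Submodule.mem_toAffineSubspace.2 (hε_perp 0))
        (fun i => Submodule.mem_toAffineSubspace.2 (hε_perp i.succ)) s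
  simp only [hdecomp]
  rw [add_sum_smul_sub_add_add, orthogonalProjection_add_sub_eq_neg
    (L'.add_sum_smul_sub_mem (hxz 0) (fun i => hxz i.succ) s) hε_comb, norm_neg]
  simpa using norm_add_sum_smul_sub_le (hε_norm 0) (fun i => hε_norm i.succ) hs

/-- Perturbed projection bound: if x̃ᵢ = xᵢ + z̃ᵢ + ε̃ᵢ with xᵢ ∈ L', z̃ᵢ in the direction of
L', ε̃ᵢ ⊥ the direction of L', and ‖x̃ᵢ − xᵢ‖ ≤ δ·t, then for any point
p = x̃₀ + Σᵢ s̃ᵢ(x̃ᵢ − x̃₀) of the affine span of the x̃ᵢ (i.e. p = P̃(y)) whose barycentric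
coefficients satisfy |s̃ᵢ| ≤ S, the orthogonal projection P onto L' satisfies
‖P(p) − p‖ ≤ (1 + 2nS)·δ·t. -/
theorem perturbed_projection_bound {H : Type*} [NormedAddCommGroup H]
    [InnerProductSpace ℝ H] [CompleteSpace H]
    (n : ℕ) (hn : 1 ≤ n) (δ t S : ℝ) (hδ : 0 < δ) (ht : 0 < t) (hS : 0 ≤ S)
    (L' : AffineSubspace ℝ H) [Nonempty L'] [Submodule.HasOrthogonalProjection L'.direction]
    (x xt z ε : Fin (n + 1) → H)
    (hx : ∀ i, x i ∈ L') (hz : ∀ i, z i ∈ L'.direction)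
    (hε : ∀ i, ∀ w ∈ L'.direction, (inner ℝ (ε i) w : ℝ) = 0)
    (hdecomp : ∀ i, xt i = x i + z i + ε i)
    (hclose : ∀ i, ‖xt i - x i‖ ≤ δ * t)
    (s : Fin n → ℝ) (hs : ∀ i, |s i| ≤ S) :
    ‖(orthogonalProjection L' (xt 0 + ∑ i, s i • (xt i.succ - xt 0)) : H) -
        (xt 0 + ∑ i, s i • (xt i.succ - xt 0))‖ ≤ (1 + 2 * n * S) * (δ * t) :=
  perturbed_projection_bound_general n δ t S L' x xt z ε hx hz hε hdecomp hclose s hs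
end
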